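/- Assume ZFU together with the assertion that every set of urelements is well-orderable. Then there is a set u such that every set of urelements w disjoint from u can be duplicated: w is equinumerous with some set of urelements w' disjoint from both u and w. -/

import Mathlib

/-!
Common framework for formalizing "Reflection in second-order set theory with abundant
urelements bi-interprets a supercompact cardinal" (Hamkins–Yao).

We represent first-order languages via Mathlib's `FirstOrder.Language`, models of the
various (urelement) set theories semantically, as types equipped with relations
satisfying the (first-order–scheme) axioms, and interpretations/bi-interpretations
of structures and theories via quotients of formula-defined domains.
-/

universe u v

namespace UST

open FirstOrder Language Cardinal

/-! ### Purely relational languages with unary and binary relation symbols -/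

/-- The relation symbols: `r1`-many unary symbols, `r2`-many binary symbols. -/
def rels (r1 r2 : Type) : ℕ → Type
  | 1 => r1
  | 2 => r2
  | _ => Empty

/-- The relational language with `r1`-many unary and `r2`-many binary relation symbols. -/
def relLang (r1 r2 : Type) : Language :=
  ⟨fun _ => Empty, rels r1 r2⟩

instance (r1 r2 : Type) : (relLang r1 r2).IsRelational :=
  fun _ => inferInstanceAs (IsEmpty Empty)

/-- Build a structure for a purely relational language from interpretations of the
unary and binary relation symbols. -/
def relStructure {M : Type u} {r1 r2 : Type} (u1 : r1 → M → Prop)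
    (u2 : r2 → M → M → Prop) : (relLang r1 r2).Structure M where
  funMap := fun f _ => Empty.elim f
  RelMap {n} :=
    match n with
    | 0 => fun R _ => Empty.elim R
    | 1 => fun R v => u1 R (v 0)
    | 2 => fun R v => u2 R (v 0) (v 1)
    | _ + 3 => fun R _ => Empty.elim R

/-- The language of pure set theory: one binary relation `∈`. -/
abbrev LST : Language := relLang Empty Unit
/-- The language of urelement set theory `{∈, 𝔸}`: a unary atom predicate and `∈`. -/
abbrev LU : Language := relLang Unit Unit
/-- The language of urelement set theory with an atom-enumeration predicate `{∈, 𝔸⃗}`: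
two binary relations, `false ↦ ∈` and `true ↦ 𝔸⃗`. -/
abbrev LUvec : Language := relLang Empty Bool
/-- One-sorted language for second-order (class) set theory: unary `isClass`, binary `∈`. -/
abbrev L2 : Language := relLang Unit Unit
/-- One-sorted language for second-order urelement set theory:
unary `false ↦ isClass`, `true ↦ 𝔸`; binary `∈`. -/
abbrev L2U : Language := relLang Bool Unit
/-- One-sorted language for second-order urelement set theory with enumeration predicate:
unary `isClass`; binary `false ↦ ∈`, `true ↦ 𝔸⃗`. -/
abbrev L2Uvec : Language := relLang Unit Bool
/-- The language of set theory with `n` additional unary (class-parameter) predicates. -/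
abbrev LP (n : ℕ) : Language := relLang (Fin n) Unit
/-- The urelement set theory language with the atom predicate (`none`) and `n` additional
unary class-parameter predicates (`some i`). -/
abbrev LPU (n : ℕ) : Language := relLang (Option (Fin n)) Unit

section Str
variable {M : Type u}

def strLST (mem : M → M → Prop) : LST.Structure M :=
  relStructure (fun e _ => Empty.elim e) (fun _ => mem)

def strLU (atom : M → Prop) (mem : M → M → Prop) : LU.Structure M :=
  relStructure (fun _ => atom) (fun _ => mem)

def strLUvec (mem Avec : M → M → Prop) : LUvec.Structure M :=
  relStructure (fun e _ => Empty.elim e) (fun b => match b with | false => mem | true => Avec)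

def strL2 (isClass : M → Prop) (mem : M → M → Prop) : L2.Structure M :=
  relStructure (fun _ => isClass) (fun _ => mem)

def strL2U (isClass atom : M → Prop) (mem : M → M → Prop) : L2U.Structure M :=
  relStructure (fun b => match b with | false => isClass | true => atom) (fun _ => mem)

def strL2Uvec (isClass : M → Prop) (mem Avec : M → M → Prop) : L2Uvec.Structure M :=
  relStructure (fun _ => isClass) (fun b => match b with | false => mem | true => Avec)

def strLP (n : ℕ) (P : Fin n → M → Prop) (mem : M → M → Prop) : (LP n).Structure M :=
  relStructure P (fun _ => mem)

def strLPU (n : ℕ) (atom : M → Prop) (P : Fin n → M → Prop) (mem : M → M → Prop) :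
    (LPU n).Structure M :=
  relStructure (fun o => Option.elim o atom P) (fun _ => mem)

/-- Realization of a bounded formula with respect to an explicitly given structure. -/
def Rlz {L : Language} (S : L.Structure M) {α : Type} {l : ℕ}
    (φ : L.BoundedFormula α l) (vs : α → M) (xs : Fin l → M) : Prop :=
  letI := S; φ.Realize vs xs

/-- Realization of a formula with respect to an explicitly given structure. -/
def RlzF {L : Language} (S : L.Structure M) {α : Type} (φ : L.Formula α) (vs : α → M) : Prop :=
  Rlz S φ vs ![]

/-- Realization of a sentence (formula with `Empty` variables) w.r.t. a given structure. -/
def RlzE {L : Language} (S : L.Structure M) (φ : L.Formula Empty) : Prop :=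
  RlzF S φ (fun e => e.elim)

end Str

/-! ### Internal set-theoretic notions in a membership structure -/

section Internal
variable {M : Type u} (isSet : M → Prop) (mem : M → M → Prop)

/-- `p` is the Kuratowski ordered pair `⟨x, y⟩`. -/
def IsOPair (p x y : M) : Prop :=
  isSet p ∧ ∃ s d, isSet s ∧ isSet d ∧ (∀ z, mem z p ↔ (z = s ∨ z = d)) ∧
    (∀ z, mem z s ↔ z = x) ∧ (∀ z, mem z d ↔ (z = x ∨ z = y))

/-- The ordered pair `⟨x, y⟩` is a member of `r`. -/
def PairIn (r x y : M) : Prop := ∃ p, mem p r ∧ IsOPair isSet mem p x y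

def TransitiveS (t : M) : Prop := ∀ y, mem y t → ∀ z, mem z y → mem z t

def SubsetS (x y : M) : Prop := ∀ z, mem z x → mem z y

def IsEmptySet (e : M) : Prop := isSet e ∧ ∀ z, ¬ mem z e

/-- von Neumann ordinals: hereditarily transitive sets (all members sets). -/
def IsOrdinal (x : M) : Prop :=
  isSet x ∧ (∀ y, mem y x → isSet y) ∧ TransitiveS mem x ∧ ∀ y, mem y x → TransitiveS mem y

def IsSuccOrd (s α : M) : Prop := ∀ z, mem z s ↔ (mem z α ∨ z = α)

def IsLimitOrd (x : M) : Prop :=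
  IsOrdinal isSet mem x ∧ (∃ y, mem y x) ∧ ∀ y, mem y x → ∃ z, mem z x ∧ mem y z

/-- `n` is `ω`, the least limit ordinal. -/
def IsOmega (n : M) : Prop :=
  IsLimitOrd isSet mem n ∧ ∀ y, mem y n → ¬ IsLimitOrd isSet mem y

/-- `f` is an (internal) function with domain `a`. -/
def IsFuncOn (f a : M) : Prop :=
  isSet f ∧ (∀ p, mem p f → ∃ x y, mem x a ∧ IsOPair isSet mem p x y) ∧
    (∀ x, mem x a → ∃ y, PairIn isSet mem f x y) ∧
    ∀ x y y', PairIn isSet mem f x y → PairIn isSet mem f x y' → y = y'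

/-- `f` is an injective function from `a` into `b`. -/
def IsInjFuncInto (f a b : M) : Prop :=
  IsFuncOn isSet mem f a ∧ (∀ x y, PairIn isSet mem f x y → mem y b) ∧
    ∀ x x' y, PairIn isSet mem f x y → PairIn isSet mem f x' y → x = x'

/-- `w` and `w'` are equinumerous, as witnessed by an internal bijection. -/
def EquinumerousI (w w' : M) : Prop :=
  ∃ f, IsInjFuncInto isSet mem f w w' ∧ ∀ y, mem y w' → ∃ x, mem x w ∧ PairIn isSet mem f x y

/-- `r` is an internal well-ordering of the set `w`: a linear order on `w` such that every
nonempty internal subset of `w` has a least element. -/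
def IsWellOrderOn (r w : M) : Prop :=
  isSet r ∧ (∀ p, mem p r → ∃ x y, mem x w ∧ mem y w ∧ IsOPair isSet mem p x y) ∧
    (∀ x, mem x w → ¬ PairIn isSet mem r x x) ∧
    (∀ x y z, PairIn isSet mem r x y → PairIn isSet mem r y z → PairIn isSet mem r x z) ∧
    (∀ x y, mem x w → mem y w → (x = y ∨ PairIn isSet mem r x y ∨ PairIn isSet mem r y x)) ∧
    ∀ s, isSet s → (∃ x, mem x s) → (∀ x, mem x s → mem x w) →
      ∃ m, mem m s ∧ ∀ x, mem x s → x = m ∨ PairIn isSet mem r m x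

def WellOrderable (w : M) : Prop := ∃ r, IsWellOrderOn isSet mem r w

def IsCardinal (κ : M) : Prop :=
  IsOrdinal isSet mem κ ∧ ∀ α, mem α κ → ¬ EquinumerousI isSet mem α κ

def IsLargestCardinal (lam : M) : Prop :=
  IsCardinal isSet mem lam ∧ ∀ κ, IsCardinal isSet mem κ → κ = lam ∨ mem κ lam

def PowersetOf (p x : M) : Prop :=
  isSet p ∧ ∀ z, mem z p ↔ (isSet z ∧ SubsetS mem z x)

/-- `κ` is a regular ordinal: the range of any internal function from an element of `κ`
into `κ` is bounded below `κ`. -/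
def IsRegular (κ : M) : Prop :=
  IsOrdinal isSet mem κ ∧ (∃ y, mem y κ) ∧
    ∀ α f, mem α κ → IsFuncOn isSet mem f α → (∀ x y, PairIn isSet mem f x y → mem y κ) →
      ∃ β, mem β κ ∧ ∀ x y, PairIn isSet mem f x y → mem y β

/-- `κ` is inaccessible: regular, above `ω`, and a strong limit (power sets of its
elements exist and have size less than `κ`). -/
def IsInaccessible (κ : M) : Prop :=
  IsRegular isSet mem κ ∧ (∀ n, IsOmega isSet mem n → mem n κ) ∧
    ∀ α, mem α κ → ∃ p, PowersetOf isSet mem p α ∧ ∃ β, mem β κ ∧ EquinumerousI isSet mem p β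

/-- `x` has size less than (the cardinal) `κ`: it is equinumerous with some element of `κ`. -/
def SizeLt (x κ : M) : Prop := ∃ β, mem β κ ∧ EquinumerousI isSet mem x β

/-- `x` has size at most that of `lam`: it injects into `lam`. -/
def SizeLe (x lam : M) : Prop := ∃ f, IsInjFuncInto isSet mem f x lam

/-- `t` codes the tuple `v` (as iterated Kuratowski pairs, with `∅` for the empty tuple). -/
def CodesTuple : (n : ℕ) → M → (Fin n → M) → Prop
  | 0, p, _ => IsEmptySet isSet mem p
  | n + 1, p, v => ∃ q, CodesTuple n q (fun i => v i.succ) ∧ IsOPair isSet mem p (v 0) q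

end Internal

/-! ### Urelement notions -/

section Urelem
variable {M : Type u} (atom : M → Prop) (mem : M → M → Prop)

def SetOfAtoms (w : M) : Prop := ¬ atom w ∧ ∀ x, mem x w → atom x

def DisjointS (w u : M) : Prop := ¬ ∃ z, mem z w ∧ mem z u

/-- `a` belongs to every transitive set containing `x`; for an atom `a` this expresses
that `a` appears in the transitive closure of `{x}`, i.e., in the support (kernel) of `x`. -/
def InKernel (a x : M) : Prop := ∀ t, TransitiveS mem t → mem x t → mem a t

/-- `x` is a pure set: no atoms appear in its kernel. -/
def IsPure (x : M) : Prop := ¬ atom x ∧ ∀ a, atom a → ¬ InKernel mem a x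

/-- `x` belongs to `V(u)`: all atoms in the kernel of `x` lie in `u`. -/
def InVof (u x : M) : Prop := ∀ a, atom a → InKernel mem a x → mem a u

/-- An automorphism of the urelement universe `⟨M, ∈, 𝔸⟩`. -/
structure UAut (atom : M → Prop) (mem : M → M → Prop) where
  toEquiv : M ≃ M
  mem_iff : ∀ x y : M, mem (toEquiv x) (toEquiv y) ↔ mem x y
  atom_iff : ∀ x : M, atom (toEquiv x) ↔ atom x

end Urelem

/-! ### First-order axioms and theories -/

section FOAxioms
variable {M : Type u} (atom : M → Prop) (mem : M → M → Prop)

def Extensionality : Prop :=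
  ∀ x y, ¬ atom x → ¬ atom y → (∀ z, mem z x ↔ mem z y) → x = y

def AtomsEmpty : Prop := ∀ a, atom a → ∀ x, ¬ mem x a

def FoundationAx : Prop :=
  ∀ x, (∃ y, mem y x) → ∃ y, mem y x ∧ ∀ z, mem z y → ¬ mem z x

def PairingAx : Prop := ∀ x y, ∃ p, ¬ atom p ∧ ∀ z, mem z p ↔ (z = x ∨ z = y)

def UnionAx : Prop := ∀ x, ∃ u, ¬ atom u ∧ ∀ z, mem z u ↔ ∃ y, mem y x ∧ mem z y

def PowerAx : Prop := ∀ x, ∃ p, PowersetOf (fun z => ¬ atom z) mem p x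

def InfinityAx : Prop :=
  ∃ I, ¬ atom I ∧ (∃ e, mem e I ∧ ¬ atom e ∧ ∀ z, ¬ mem z e) ∧
    ∀ x, mem x I → ∃ s, mem s I ∧ ¬ atom s ∧ ∀ z, mem z s ↔ (mem z x ∨ z = x)

/-- The axiom of choice: every family of nonempty pairwise-disjoint sets has a selector. -/
def ChoiceAx : Prop :=
  ∀ F, (∀ x, mem x F → ∃ y, mem y x) →
    (∀ x y, mem x F → mem y F → x ≠ y → ¬ ∃ z, mem z x ∧ mem z y) →
    ∃ C, ∀ x, mem x F → ∃ z, mem z x ∧ mem z C ∧ ∀ w, mem w x → mem w C → w = z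

/-- The well-ordering principle (the appropriate form of choice without power set). -/
def WOPrinciple : Prop := ∀ x, ¬ atom x → WellOrderable (fun z => ¬ atom z) mem x

/-- The separation scheme for first-order formulas of the language `L` (with parameters). -/
def SeparationScheme (L : Language) (S : L.Structure M) : Prop :=
  ∀ (k : ℕ) (φ : L.BoundedFormula (Fin k) 1) (p : Fin k → M) (a : M),
    ∃ b, ¬ atom b ∧ ∀ x, mem x b ↔ (mem x a ∧ Rlz S φ p ![x])

/-- The collection scheme for first-order formulas of the language `L` (with parameters). -/
def CollectionScheme (L : Language) (S : L.Structure M) : Prop :=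
  ∀ (k : ℕ) (φ : L.BoundedFormula (Fin k) 2) (p : Fin k → M) (a : M),
    (∀ x, mem x a → ∃ y, Rlz S φ p ![x, y]) →
    ∃ b, ¬ atom b ∧ ∀ x, mem x a → ∃ y, mem y b ∧ Rlz S φ p ![x, y]

end FOAxioms

section FOTheories
variable {M : Type u}

/-- Zermelo–Fraenkel set theory `ZF`, semantically: the axioms of extensionality,
foundation, pairing, union, power set, infinity, and the separation and collection
schemes for first-order formulas of the language `{∈}`. -/
def ZF (mem : M → M → Prop) : Prop :=
  Extensionality (fun _ => False) mem ∧ FoundationAx mem ∧ PairingAx (fun _ => False) mem ∧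
    UnionAx (fun _ => False) mem ∧ PowerAx (fun _ => False) mem ∧
    InfinityAx (fun _ => False) mem ∧
    SeparationScheme (fun _ => False) mem LST (strLST mem) ∧
    CollectionScheme (fun _ => False) mem LST (strLST mem)

def ZFC (mem : M → M → Prop) : Prop := ZF mem ∧ ChoiceAx mem

/-- `ZFC⁻`: `ZFC` without the power set axiom, with collection and separation, and with
choice in the form of the well-ordering principle. -/
def ZFCminus (mem : M → M → Prop) : Prop :=
  Extensionality (fun _ => False) mem ∧ FoundationAx mem ∧ PairingAx (fun _ => False) mem ∧
    UnionAx (fun _ => False) mem ∧ InfinityAx (fun _ => False) mem ∧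
    SeparationScheme (fun _ => False) mem LST (strLST mem) ∧
    CollectionScheme (fun _ => False) mem LST (strLST mem) ∧
    WOPrinciple (fun _ => False) mem

/-- Urelement set theory `ZFU` in the language `{∈, 𝔸}`: extensionality for sets,
atoms have no members, foundation, pairing, union, power set, infinity, and the
separation and collection schemes. -/
def ZFU (atom : M → Prop) (mem : M → M → Prop) : Prop :=
  Extensionality atom mem ∧ AtomsEmpty atom mem ∧ FoundationAx mem ∧ PairingAx atom mem ∧
    UnionAx atom mem ∧ PowerAx atom mem ∧ InfinityAx atom mem ∧
    SeparationScheme atom mem LU (strLU atom mem) ∧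
    CollectionScheme atom mem LU (strLU atom mem)

def ZFCU (atom : M → Prop) (mem : M → M → Prop) : Prop := ZFU atom mem ∧ ChoiceAx mem

/-- `ZFCU⁻`: urelement set theory with choice (well-ordering principle) but without power set. -/
def ZFCUminus (atom : M → Prop) (mem : M → M → Prop) : Prop :=
  Extensionality atom mem ∧ AtomsEmpty atom mem ∧ FoundationAx mem ∧ PairingAx atom mem ∧
    UnionAx atom mem ∧ InfinityAx atom mem ∧
    SeparationScheme atom mem LU (strLU atom mem) ∧
    CollectionScheme atom mem LU (strLU atom mem) ∧
    WOPrinciple atom mem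

/-- The atoms of a structure for the language `{∈, 𝔸⃗}`: objects enumerated by `𝔸⃗`. -/
def atomOfVec (Avec : M → M → Prop) : M → Prop := fun x => ∃ i, Avec i x

/-- Urelement set theory `ZFU⃗` in the language `{∈, 𝔸⃗}` with the atom-enumeration
predicate, whose schemes are for formulas of this extended language. -/
def ZFUvec (mem Avec : M → M → Prop) : Prop :=
  Extensionality (atomOfVec Avec) mem ∧ AtomsEmpty (atomOfVec Avec) mem ∧ FoundationAx mem ∧
    PairingAx (atomOfVec Avec) mem ∧ UnionAx (atomOfVec Avec) mem ∧
    PowerAx (atomOfVec Avec) mem ∧ InfinityAx (atomOfVec Avec) mem ∧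
    SeparationScheme (atomOfVec Avec) mem LUvec (strLUvec mem Avec) ∧
    CollectionScheme (atomOfVec Avec) mem LUvec (strLUvec mem Avec)

def ZFCUvec (mem Avec : M → M → Prop) : Prop := ZFUvec mem Avec ∧ ChoiceAx mem

end FOTheories
/-! ### First-order reflection and dependent choice in urelement set theory -/

section FORefl
variable {M : Type u} (atom : M → Prop) (mem : M → M → Prop)

/-- The induced `{∈, 𝔸}`-structure on the members of `v`. -/
def strLUsub (v : M) : LU.Structure {x : M // mem x v} :=
  strLU (fun a => atom a.1) (fun a b => mem a.1 b.1)

/-- The first-order reflection principle for urelement set theory: for every set `p` and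
every formula `φ` of the language `{∈, 𝔸}`, there is a transitive set `v` containing `p`
such that `φ` (with any parameters from `v`) is absolute between `v` and the universe. -/
def FOReflection : Prop :=
  ∀ (k : ℕ) (φ : LU.Formula (Fin k)) (p : M),
    ∃ v, ¬ atom v ∧ TransitiveS mem v ∧ mem p v ∧
      ∀ q : Fin k → {x : M // mem x v},
        (RlzF (strLUsub atom mem v) φ q ↔ RlzF (strLU atom mem) φ (fun i => (q i).1))

/-- The `ω`-dependent choice scheme for definable class relations, with set parameters:
if `χ` defines a nonempty class `X` and `ρ` defines a relation `R` on `X` such that every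
element of `X` has an `R`-successor in `X`, then there is an internal `ω`-sequence
threading `R`. -/
def OmegaDCScheme : Prop :=
  ∀ (k : ℕ) (χ : LU.BoundedFormula (Fin k) 1) (ρ : LU.BoundedFormula (Fin k) 2)
    (p : Fin k → M),
    (∃ x, Rlz (strLU atom mem) χ p ![x]) →
    (∀ x, Rlz (strLU atom mem) χ p ![x] →
      ∃ y, Rlz (strLU atom mem) χ p ![y] ∧ Rlz (strLU atom mem) ρ p ![x, y]) →
    ∃ om f, IsOmega (fun z => ¬ atom z) mem om ∧ IsFuncOn (fun z => ¬ atom z) mem f om ∧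
      (∀ n y, mem n om → PairIn (fun z => ¬ atom z) mem f n y →
        Rlz (strLU atom mem) χ p ![y]) ∧
      ∀ n n' y y', mem n om → mem n' om → IsSuccOrd mem n' n →
        PairIn (fun z => ¬ atom z) mem f n y → PairIn (fun z => ¬ atom z) mem f n' y' →
        Rlz (strLU atom mem) ρ p ![y, y']

end FORefl
/-! ### Second-order (class) set theory, in a one-sorted presentation

A model of second-order (urelement) set theory is presented as a type `M` together with
predicates `isClass` (distinguishing the classes from the first-order objects) and `atom`,
and a membership relation `mem`.  Pure class theories take `atom := fun _ => False`. -/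

section ClassModels
variable {M : Type u} (isClass atom : M → Prop) (mem : M → M → Prop)

def IsObj (x : M) : Prop := ¬ isClass x

/-- The sets of a class model: first-order objects that are not atoms. -/
def IsSetO (x : M) : Prop := ¬ isClass x ∧ ¬ atom x

def Sorting : Prop := (∀ x y, mem x y → ¬ isClass x) ∧ (∀ a, atom a → ¬ isClass a)

def ClassExt : Prop := ∀ X Y, isClass X → isClass Y → (∀ x, mem x X ↔ mem x Y) → X = Y

def SetExt : Prop :=
  ∀ x y, IsSetO isClass atom x → IsSetO isClass atom y → (∀ z, mem z x ↔ mem z y) → x = y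

def FoundationO : Prop :=
  ∀ x, ¬ isClass x → (∃ y, mem y x) → ∃ y, mem y x ∧ ∀ z, mem z y → ¬ mem z x

def PairingO : Prop :=
  ∀ x y, IsObj isClass x → IsObj isClass y →
    ∃ p, IsSetO isClass atom p ∧ ∀ z, mem z p ↔ (z = x ∨ z = y)

def UnionO : Prop :=
  ∀ x, IsObj isClass x → ∃ s, IsSetO isClass atom s ∧ ∀ z, mem z s ↔ ∃ y, mem y x ∧ mem z y

def PowerO : Prop :=
  ∀ x, IsObj isClass x → ∃ p, IsSetO isClass atom p ∧
    ∀ z, mem z p ↔ (IsSetO isClass atom z ∧ SubsetS mem z x)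

def InfinityO : Prop :=
  ∃ I, IsSetO isClass atom I ∧ (∃ e, mem e I ∧ IsSetO isClass atom e ∧ ∀ z, ¬ mem z e) ∧
    ∀ x, mem x I → ∃ s, mem s I ∧ IsSetO isClass atom s ∧ ∀ z, mem z s ↔ (mem z x ∨ z = x)

def ChoiceO : Prop :=
  ∀ F, IsObj isClass F → (∀ x, mem x F → ∃ y, mem y x) →
    (∀ x y, mem x F → mem y F → x ≠ y → ¬ ∃ z, mem z x ∧ mem z y) →
    ∃ C, IsObj isClass C ∧ ∀ x, mem x F → ∃ z, mem z x ∧ mem z C ∧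
      ∀ w, mem w x → mem w C → w = z

/-- Every subclass of a set is a set (class-parameter separation). -/
def ClassSeparation : Prop :=
  ∀ C, isClass C → ∀ a, IsObj isClass a →
    ∃ b, IsSetO isClass atom b ∧ ∀ x, mem x b ↔ (mem x a ∧ mem x C)

/-- Collection for class relations: if the class `C` (of ordered pairs) relates every
element of the set `a` to some object, then witnesses can be collected into a set. -/
def ClassCollection : Prop :=
  ∀ C, isClass C → ∀ a, IsObj isClass a →
    (∀ x, mem x a → ∃ y, IsObj isClass y ∧ PairIn (IsSetO isClass atom) mem C x y) →
    ∃ b, IsSetO isClass atom b ∧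
      ∀ x, mem x a → ∃ y, mem y b ∧ PairIn (IsSetO isClass atom) mem C x y

/-- The global well-order principle: some class well-orders the first-order objects,
with every nonempty class having a least element. -/
def GlobalWellOrder : Prop :=
  ∃ W, isClass W ∧
    (∀ p, mem p W → ∃ x y, IsObj isClass x ∧ IsObj isClass y ∧
      IsOPair (IsSetO isClass atom) mem p x y) ∧
    (∀ x, IsObj isClass x → ¬ PairIn (IsSetO isClass atom) mem W x x) ∧
    (∀ x y z, PairIn (IsSetO isClass atom) mem W x y →
      PairIn (IsSetO isClass atom) mem W y z → PairIn (IsSetO isClass atom) mem W x z) ∧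
    (∀ x y, IsObj isClass x → IsObj isClass y →
      (x = y ∨ PairIn (IsSetO isClass atom) mem W x y ∨
        PairIn (IsSetO isClass atom) mem W y x)) ∧
    ∀ C, isClass C → (∃ x, mem x C) →
      ∃ m, mem m C ∧ ∀ x, mem x C → x = m ∨ PairIn (IsSetO isClass atom) mem W m x

/-- Full (second-order) class comprehension for formulas of the ambient one-sorted
language `L`, whose quantifiers range over both objects and classes. -/
def SOComprehension (L : Language) (S : L.Structure M) : Prop :=
  ∀ (k : ℕ) (φ : L.BoundedFormula (Fin k) 1) (p : Fin k → M),
    ∃ D, isClass D ∧ ∀ x, IsObj isClass x → (mem x D ↔ Rlz S φ p ![x])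

/-- The type of first-order objects of a class model. -/
def Osub (isClass : M → Prop) : Type u := {x : M // ¬ isClass x}

/-- The first-order part of an urelement class model, with `n` class parameters
interpreted as unary predicates. -/
def strObjU (n : ℕ) (Cs : Fin n → M) : (LPU n).Structure (Osub isClass) :=
  strLPU n (fun x => atom x.1) (fun i x => mem x.1 (Cs i)) (fun x y => mem x.1 y.1)

/-- The first-order part of a pure class model, with `n` class parameters. -/
def strObjP (n : ℕ) (Cs : Fin n → M) : (LP n).Structure (Osub isClass) :=
  strLP n (fun i x => mem x.1 (Cs i)) (fun x y => mem x.1 y.1)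

/-- First-order class comprehension (urelement version): comprehension for formulas
whose quantifiers range over the first-order objects only, allowing class parameters. -/
def FOComprehensionU : Prop :=
  ∀ (n k : ℕ) (Cs : Fin n → M), (∀ i, isClass (Cs i)) →
    ∀ (φ : (LPU n).BoundedFormula (Fin k) 1) (p : Fin k → Osub isClass),
      ∃ D, isClass D ∧ ∀ x : Osub isClass,
        mem x.1 D ↔ Rlz (strObjU isClass atom mem n Cs) φ p ![x]

/-- First-order class comprehension (pure version). -/
def FOComprehensionP : Prop :=
  ∀ (n k : ℕ) (Cs : Fin n → M), (∀ i, isClass (Cs i)) →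
    ∀ (φ : (LP n).BoundedFormula (Fin k) 1) (p : Fin k → Osub isClass),
      ∃ D, isClass D ∧ ∀ x : Osub isClass,
        mem x.1 D ↔ Rlz (strObjP isClass mem n Cs) φ p ![x]

/-- The class choice principle `CC` for formulas of the ambient language `L`: if every
`i ∈ I` has a class `X` with `φ(i, X)`, then there is a single class `Y ⊆ I × V` whose
sections witness this. -/
def ClassChoice (L : Language) (S : L.Structure M) : Prop :=
  ∀ (k : ℕ) (φ : L.BoundedFormula (Fin k) 2) (p : Fin k → M) (I : M), isClass I →
    (∀ i, mem i I → ∃ X, isClass X ∧ Rlz S φ p ![i, X]) →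
    ∃ Y, isClass Y ∧ ∀ i, mem i I → ∃ X, isClass X ∧
      (∀ x, IsObj isClass x → (mem x X ↔ PairIn (IsSetO isClass atom) mem Y i x)) ∧
      Rlz S φ p ![i, X]

/-- The common axioms of the second-order urelement set theories: sorting, extensionality
for sets and for classes, atoms empty, foundation, pairing, union, power set, infinity,
class separation, and class collection. -/
def ClassBase : Prop :=
  Sorting isClass atom mem ∧ ClassExt isClass mem ∧ SetExt isClass atom mem ∧
    AtomsEmpty atom mem ∧ FoundationO isClass mem ∧ PairingO isClass atom mem ∧
    UnionO isClass atom mem ∧ PowerO isClass atom mem ∧ InfinityO isClass atom mem ∧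
    ClassSeparation isClass atom mem ∧ ClassCollection isClass atom mem

/-- Gödel–Bernays set theory with urelements, with choice for sets but without the
global choice principle. -/
def GBcU : Prop :=
  ClassBase isClass atom mem ∧ FOComprehensionU isClass atom mem ∧ ChoiceO isClass mem

/-- Gödel–Bernays set theory with urelements `GBCU`, including global choice in the form
of a global well-order class. -/
def GBCU : Prop :=
  ClassBase isClass atom mem ∧ FOComprehensionU isClass atom mem ∧
    GlobalWellOrder isClass atom mem

/-- Kelley–Morse set theory with urelements `KMU`. -/
def KMU : Prop :=
  ClassBase isClass atom mem ∧ SOComprehension isClass mem L2U (strL2U isClass atom mem) ∧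
    GlobalWellOrder isClass atom mem

/-- The class choice principle for urelement class models. -/
def CCU : Prop := ClassChoice isClass atom mem L2U (strL2U isClass atom mem)

end ClassModels

section PureClassModels
variable {M : Type u} (isClass : M → Prop) (mem : M → M → Prop)

/-- Gödel–Bernays set theory `GBc` with choice for sets but not global choice. -/
def GBc : Prop :=
  ClassBase isClass (fun _ => False) mem ∧ FOComprehensionP isClass mem ∧
    ChoiceO isClass mem

/-- Gödel–Bernays set theory `GBC` with the global well-order principle. -/
def GBC : Prop :=
  ClassBase isClass (fun _ => False) mem ∧ FOComprehensionP isClass mem ∧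
    GlobalWellOrder isClass (fun _ => False) mem

/-- Kelley–Morse set theory `KM`. -/
def KM : Prop :=
  ClassBase isClass (fun _ => False) mem ∧
    SOComprehension isClass mem L2 (strL2 isClass mem) ∧
    GlobalWellOrder isClass (fun _ => False) mem

/-- The class choice principle `CC` for pure class models. -/
def CC : Prop := ClassChoice isClass (fun _ => False) mem L2 (strL2 isClass mem)

end PureClassModels
/-! ### Second-order reflection in class models -/

section SORefl
variable {M : Type u} (isClass atom : M → Prop) (mem : M → M → Prop)

/-- The carrier of the full second-order structure `⟨v, ∈, P(v)⟩` determined by a set `v`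
of a class model: its objects are the members of `v` and its classes are the sets of the
model that are subsets of `v` (all subsets of `v`, computed in the model). -/
def RC (v : M) : Type u :=
  {x : M // mem x v} ⊕ {s : M // IsSetO isClass atom s ∧ ∀ z, mem z s → mem z v}

def rcIsClass (v : M) : RC isClass atom mem v → Prop :=
  fun z => match z with | .inl _ => False | .inr _ => True

def rcAtom (v : M) : RC isClass atom mem v → Prop :=
  fun z => match z with | .inl x => atom x.1 | .inr _ => False

def rcMem (v : M) : RC isClass atom mem v → RC isClass atom mem v → Prop :=
  fun a b => match a, b with
    | .inl x, .inl y => mem x.1 y.1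
    | .inl x, .inr s => mem x.1 s.1
    | _, _ => False

/-- The second-order reflection principle for urelement class models: every second-order
statement `φ(X⃗)` (a formula of the one-sorted language of class theory with urelements)
true in the model of class parameters `X⃗` is true in `⟨v, ∈, P(v)⟩` of the cut-down
parameters `X⃗ ∩ v`, for some transitive set `v`. -/
def SOReflectionU : Prop :=
  ∀ (k : ℕ) (φ : L2U.Formula (Fin k)) (Xs : Fin k → M), (∀ i, isClass (Xs i)) →
    RlzF (strL2U isClass atom mem) φ Xs →
    ∃ v, IsSetO isClass atom v ∧ TransitiveS mem v ∧
      ∃ Xv : Fin k → RC isClass atom mem v,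
        (∀ i, ∃ s hs, Xv i = Sum.inr ⟨s, hs⟩ ∧ ∀ z, mem z s ↔ (mem z v ∧ mem z (Xs i))) ∧
        RlzF (strL2U (rcIsClass isClass atom mem v) (rcAtom isClass atom mem v)
          (rcMem isClass atom mem v)) φ Xv

/-- The second-order reflection principle for pure class models. -/
def SOReflection : Prop :=
  ∀ (k : ℕ) (φ : L2.Formula (Fin k)) (Xs : Fin k → M), (∀ i, isClass (Xs i)) →
    RlzF (strL2 isClass mem) φ Xs →
    ∃ v, IsSetO isClass atom v ∧ TransitiveS mem v ∧
      ∃ Xv : Fin k → RC isClass atom mem v,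
        (∀ i, ∃ s hs, Xv i = Sum.inr ⟨s, hs⟩ ∧ ∀ z, mem z s ↔ (mem z v ∧ mem z (Xs i))) ∧
        RlzF (strL2 (rcIsClass isClass atom mem v) (rcMem isClass atom mem v)) φ Xv

/-- The induced structure on the members of a set `v`, in the language of set theory
with the atom predicate and `n` unary predicates for (restricted) class parameters. -/
def strMemSubU (n : ℕ) (v : M) (Cs : Fin n → M) : (LPU n).Structure {x : M // mem x v} :=
  strLPU n (fun x => atom x.1) (fun i x => mem x.1 (Cs i)) (fun x y => mem x.1 y.1)

/-- The `Π¹₁` reflection principle for urelement class models: every true statement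
`∀ C₁ ⋯ ∀ C_j ψ(C⃗, P⃗)`, with `ψ` first-order in the language `{∈, 𝔸}` with predicates
for the quantified classes `C⃗` and class parameters `P⃗`, reflects to some transitive
set `v`, where the quantified classes then range over the subsets of `v` in the model
and the parameters are restricted to `v`. -/
def Pi11ReflectionU : Prop :=
  ∀ (j k : ℕ) (ψ : (LPU (j + k)).Formula Empty) (Ps : Fin k → M), (∀ i, isClass (Ps i)) →
    (∀ Cs : Fin j → M, (∀ i, isClass (Cs i)) →
      RlzE (strObjU isClass atom mem (j + k) (Fin.append Cs Ps)) ψ) →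
    ∃ v, IsSetO isClass atom v ∧ TransitiveS mem v ∧
      ∀ Cs : Fin j → M, (∀ i, IsSetO isClass atom (Cs i) ∧ SubsetS mem (Cs i) v) →
        RlzE (strMemSubU atom mem (j + k) v (Fin.append Cs Ps)) ψ

end SORefl

/-! ### Rank levels and `Π¹ₙ`-indescribability inside a class model -/

section Indesc
variable {M : Type u} (isSet : M → Prop) (mem : M → M → Prop)

/-- `F` is the cumulative-hierarchy function `β ↦ V_β` for `β ≤ lam`: `F(∅) = ∅`,
`F(β + 1) = P(F(β))`, and unions at limits. -/
def IsVSeq (F lam : M) : Prop :=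
  isSet F ∧
    (∀ p, mem p F → ∃ β y, (mem β lam ∨ β = lam) ∧ IsOPair isSet mem p β y) ∧
    (∀ β, (mem β lam ∨ β = lam) → ∃ y, PairIn isSet mem F β y) ∧
    (∀ β y y', PairIn isSet mem F β y → PairIn isSet mem F β y' → y = y') ∧
    (∀ β y, PairIn isSet mem F β y → (∀ z, ¬ mem z β) → ∀ z, ¬ mem z y) ∧
    (∀ β β' y y', PairIn isSet mem F β y → PairIn isSet mem F β' y' →
      IsSuccOrd mem β' β → PowersetOf isSet mem y' y) ∧
    (∀ β y, PairIn isSet mem F β y → IsLimitOrd isSet mem β →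
      ∀ z, mem z y ↔ ∃ γ y', mem γ β ∧ PairIn isSet mem F γ y' ∧ mem z y')

/-- `v` is the rank level `V_α` of the cumulative hierarchy. -/
def IsRankLevel (α v : M) : Prop :=
  IsOrdinal isSet mem α ∧ ∃ F, IsVSeq isSet mem F α ∧ PairIn isSet mem F α v

end Indesc

section Indesc2
variable {M : Type u} (isClass : M → Prop) (mem : M → M → Prop)

/-- Satisfaction over the members of `v` of a first-order formula in the language with
`m` unary predicates, interpreted by the list `l` of sets (via membership). -/
def FOSatList (v : M) (m : ℕ) (ψ : (LP m).Formula Empty) (l : List M) : Prop :=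
  RlzE (strLP m (fun i (x : {x : M // mem x v}) => ∃ C, l[(i : ℕ)]? = some C ∧ mem x.1 C)
    (fun x y => mem x.1 y.1)) ψ

/-- Alternating blocks of second-order quantifiers over the model's subsets of `v`:
`bs` lists the block sizes, starting with a universal block when `univ = true`. -/
def AltSat (atom : M → Prop) (v : M) : List ℕ → Bool → List M → (List M → Prop) → Prop
  | [], _, acc, P => P acc
  | b :: rest, true, acc, P =>
      ∀ Cs : Fin b → M, (∀ i, IsSetO isClass atom (Cs i) ∧ SubsetS mem (Cs i) v) →
        AltSat atom v rest false (acc ++ List.ofFn Cs) P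
  | b :: rest, false, acc, P =>
      ∃ Cs : Fin b → M, (∀ i, IsSetO isClass atom (Cs i) ∧ SubsetS mem (Cs i) v) ∧
        AltSat atom v rest true (acc ++ List.ofFn Cs) P

/-- `κ` is `Π¹ₙ`-indescribable (inside a pure class model): every `Π¹ₙ` statement, with
second-order quantifier blocks `bs` (`n` alternations starting universal) and subset
parameters `Y⃗ ⊆ V_κ`, true in `⟨V_κ, ∈, Y⃗⟩` is true in `⟨V_γ, ∈, Y⃗ ∩ V_γ⟩` for some
`γ < κ`. -/
def PiIndescribable (atom : M → Prop) (n : ℕ) (κ : M) : Prop :=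
  IsOrdinal (IsSetO isClass atom) mem κ ∧
  ∀ vκ, IsRankLevel (IsSetO isClass atom) mem κ vκ →
  ∀ (bs : List ℕ), bs.length = n →
  ∀ (Y : List M), (∀ C ∈ Y, IsSetO isClass atom C ∧ SubsetS mem C vκ) →
  ∀ ψ : (LP (Y.length + bs.sum)).Formula Empty,
    AltSat isClass mem atom vκ bs true []
      (fun l => FOSatList mem vκ (Y.length + bs.sum) ψ (Y ++ l)) →
    ∃ γ vγ, mem γ κ ∧ IsRankLevel (IsSetO isClass atom) mem γ vγ ∧
      AltSat isClass mem atom vγ bs true []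
        (fun l => FOSatList mem vγ (Y.length + bs.sum) ψ (Y ++ l))

/-- `C` is a closed unbounded class of ordinals. -/
def ClubClass (atom : M → Prop) (C : M) : Prop :=
  isClass C ∧ (∀ x, mem x C → IsOrdinal (IsSetO isClass atom) mem x) ∧
    (∀ α, IsOrdinal (IsSetO isClass atom) mem α → ∃ γ, mem γ C ∧ mem α γ) ∧
    ∀ lam, IsLimitOrd (IsSetO isClass atom) mem lam →
      (∀ β, mem β lam → ∃ γ, mem γ C ∧ mem γ lam ∧ (mem β γ ∨ β = γ)) → mem lam C

end Indesc2
/-! ### Class cardinality comparisons, the abundant atom axiom -/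

section ClassCard
variable {M : Type u} (isClass atom : M → Prop) (mem : M → M → Prop)

/-- The class `F` is (the graph of) an injective function from `{x | P x}` into `{y | Q y}`. -/
def ClassInjPred (F : M) (P Q : M → Prop) : Prop :=
  isClass F ∧
    (∀ p, mem p F → ∃ x y, P x ∧ Q y ∧ IsOPair (IsSetO isClass atom) mem p x y) ∧
    (∀ x, P x → ∃ y, Q y ∧ PairIn (IsSetO isClass atom) mem F x y) ∧
    (∀ x y y', PairIn (IsSetO isClass atom) mem F x y →
      PairIn (IsSetO isClass atom) mem F x y' → y = y') ∧
    (∀ x x' y, PairIn (IsSetO isClass atom) mem F x y →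
      PairIn (IsSetO isClass atom) mem F x' y → x = x')

/-- The class `F` is a bijection between `{x | P x}` and `{y | Q y}`. -/
def ClassBijPred (F : M) (P Q : M → Prop) : Prop :=
  ClassInjPred isClass atom mem F P Q ∧
    ∀ y, Q y → ∃ x, P x ∧ PairIn (IsSetO isClass atom) mem F x y

/-- `{x | P x}` is strictly smaller in equinumerosity than `{y | Q y}`: it injects into it
but admits no class bijection with it. -/
def PredSmaller (P Q : M → Prop) : Prop :=
  (∃ F, ClassInjPred isClass atom mem F P Q) ∧ ¬ ∃ F, ClassBijPred isClass atom mem F P Q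

/-- A class is small if it is strictly smaller in equinumerosity than the class of all atoms. -/
def SmallClass (C : M) : Prop :=
  isClass C ∧ PredSmaller isClass atom mem (fun x => mem x C) atom

/-- The atom-smallness of a class given as a predicate. -/
def PredSmall (P : M → Prop) : Prop := PredSmaller isClass atom mem P atom

/-- The class of urelements is strictly larger than `Ord`. -/
def AtomsMoreThanOrd : Prop :=
  PredSmaller isClass atom mem (IsOrdinal (IsSetO isClass atom) mem) atom

/-- There are `Ord` many atoms: a class bijection between the ordinals and the atoms. -/
def OrdManyAtoms : Prop :=
  ∃ F, ClassBijPred isClass atom mem F (IsOrdinal (IsSetO isClass atom) mem) atom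

/-- The class of atoms is not injectable into the class of ordinals
("more than `Ord` many urelements"). -/
def AtomsNotInjOrd : Prop :=
  ¬ ∃ F, ClassInjPred isClass atom mem F atom (IsOrdinal (IsSetO isClass atom) mem)

/-- The abundant atom axiom: (1) there are more than `Ord` many atoms; (2) every small
class of urelements admits a small power class; (3) every small-indexed class of small
classes (of atoms) is small. -/
def AbundantAtomAxiom : Prop :=
  AtomsMoreThanOrd isClass atom mem ∧
  (∀ B, isClass B → (∀ a, mem a B → atom a) → SmallClass isClass atom mem B →
    ∃ I D, SmallClass isClass atom mem I ∧ isClass D ∧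
      (∀ p, mem p D → ∃ i b, mem i I ∧ mem b B ∧ IsOPair (IsSetO isClass atom) mem p i b) ∧
      ∀ X, isClass X → (∀ x, mem x X → mem x B) →
        ∃ i, mem i I ∧ ∀ b, mem b B →
          (mem b X ↔ PairIn (IsSetO isClass atom) mem D i b)) ∧
  (∀ I D, SmallClass isClass atom mem I → isClass D →
    (∀ p, mem p D → ∃ i a, mem i I ∧ atom a ∧ IsOPair (IsSetO isClass atom) mem p i a) →
    (∀ i, mem i I → PredSmall isClass atom mem
      (fun a => PairIn (IsSetO isClass atom) mem D i a)) →
    SmallClass isClass atom mem D)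

end ClassCard

/-! ### The hereditary model `⟨H_κ(A), ∈, ℋ⟩` of a class model -/

section Hered
variable {M : Type u} (isClass atom : M → Prop) (mem : M → M → Prop)

/-- `x` belongs to `H_κ(A)`: it is an atom or a member of a transitive set of size
less than `κ`. -/
def InHk (κ x : M) : Prop :=
  atom x ∨ ∃ t, IsSetO isClass atom t ∧ TransitiveS mem t ∧ mem x t ∧
    SizeLt (IsSetO isClass atom) mem t κ

/-- The carrier of the hereditary model: its objects are the members of `H_κ(A)` and its
classes are the classes of the ambient model contained in `H_κ(A)`. -/
def HCar (κ : M) : Type u :=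
  {x : M // IsObj isClass x ∧ InHk isClass atom mem κ x} ⊕
    {X : M // isClass X ∧ ∀ z, mem z X → InHk isClass atom mem κ z}

def hIsClass (κ : M) : HCar isClass atom mem κ → Prop :=
  fun z => match z with | .inl _ => False | .inr _ => True

def hAtom (κ : M) : HCar isClass atom mem κ → Prop :=
  fun z => match z with | .inl x => atom x.1 | .inr _ => False

def hMem (κ : M) : HCar isClass atom mem κ → HCar isClass atom mem κ → Prop :=
  fun a b => match a, b with
    | .inl x, .inl y => mem x.1 y.1
    | .inl x, .inr Y => mem x.1 Y.1
    | _, _ => False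

end Hered

/-! ### Internal supercompactness notions -/

section InternalSC
variable {M : Type u} (isSet : M → Prop) (mem : M → M → Prop)

/-- `P` is the set `P_κ(lam)` of subsets of `lam` of size less than `κ`. -/
def IsPklSet (P κ lam : M) : Prop :=
  isSet P ∧ ∀ x, mem x P ↔ (isSet x ∧ SubsetS mem x lam ∧ SizeLt isSet mem x κ)

/-- `U` is a normal fine `κ`-complete ultrafilter on `P = P_κ(lam)`. -/
def IsNFUMeasure (U P κ lam : M) : Prop :=
  isSet U ∧ (∀ X, mem X U → isSet X ∧ SubsetS mem X P) ∧
    (∀ X, mem X U → ∃ s, mem s X) ∧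
    (∀ X, isSet X → SubsetS mem X P →
      (mem X U ∨ ∃ Xc, isSet Xc ∧ (∀ s, mem s Xc ↔ (mem s P ∧ ¬ mem s X)) ∧ mem Xc U)) ∧
    (∀ α h, mem α κ → IsFuncOn isSet mem h α →
      (∀ ξ y, PairIn isSet mem h ξ y → mem y U) →
      ∃ X, mem X U ∧ ∀ s, mem s X ↔
        (mem s P ∧ ∀ ξ y, mem ξ α → PairIn isSet mem h ξ y → mem s y)) ∧
    (∀ a, mem a lam → ∃ X, mem X U ∧ ∀ s, mem s X ↔ (mem s P ∧ mem a s)) ∧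
    (∀ f, IsFuncOn isSet mem f P →
      (∀ s y, PairIn isSet mem f s y → (∃ z, mem z s) → mem y s) →
      ∃ a X, mem a lam ∧ mem X U ∧ ∀ s y, mem s X → PairIn isSet mem f s y → y = a)

/-- `κ` is internally `lam`-supercompact: there is a normal fine `κ`-complete ultrafilter
on `P_κ(lam)`. -/
def InternalSCWith (κ lam : M) : Prop :=
  ∃ P U, IsPklSet isSet mem P κ lam ∧ IsNFUMeasure isSet mem U P κ lam

/-- `κ` is internally `<lam`-supercompact. -/
def InternalSCBelow (κ lam : M) : Prop :=
  ∀ γ, mem γ lam → (mem κ γ ∨ κ = γ) → InternalSCWith isSet mem κ γ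

/-- `κ` is internally supercompact: `lam`-supercompact for every ordinal `lam ≥ κ`. -/
def InternalSC (κ : M) : Prop :=
  ∀ lam, IsOrdinal isSet mem lam → (mem κ lam ∨ κ = lam) → InternalSCWith isSet mem κ lam

/-- `κ` is internally nearly `lam`-supercompact, via Schanker's filter characterization:
for any families of at most `lam` many subsets of `P_κ(lam)` and at most `lam` many
functions `P_κ(lam) → lam`, there is a `κ`-complete fine filter on `P_κ(lam)` measuring
every set in the first family and normal for the second. -/
def InternalNearlySC (κ lam : M) : Prop :=
  ∀ P, IsPklSet isSet mem P κ lam →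
  ∀ SS FF, isSet SS → (∀ X, mem X SS → isSet X ∧ SubsetS mem X P) →
    SizeLe isSet mem SS lam →
    isSet FF →
    (∀ f, mem f FF → IsFuncOn isSet mem f P ∧ ∀ s y, PairIn isSet mem f s y → mem y lam) →
    SizeLe isSet mem FF lam →
    ∃ Fl, isSet Fl ∧ (∀ X, mem X Fl → isSet X ∧ SubsetS mem X P) ∧ (∃ X, mem X Fl) ∧
      (∀ X, mem X Fl → ∃ s, mem s X) ∧
      (∀ X Y, mem X Fl → isSet Y → SubsetS mem Y P → SubsetS mem X Y → mem Y Fl) ∧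
      (∀ α h, mem α κ → IsFuncOn isSet mem h α →
        (∀ ξ y, PairIn isSet mem h ξ y → mem y Fl) →
        ∃ X, mem X Fl ∧ ∀ s, mem s X ↔
          (mem s P ∧ ∀ ξ y, mem ξ α → PairIn isSet mem h ξ y → mem s y)) ∧
      (∀ a, mem a lam → ∃ X, mem X Fl ∧ ∀ s, mem s X ↔ (mem s P ∧ mem a s)) ∧
      (∀ X, mem X SS → (mem X Fl ∨ ∃ Xc, isSet Xc ∧
        (∀ s, mem s Xc ↔ (mem s P ∧ ¬ mem s X)) ∧ mem Xc Fl)) ∧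
      (∀ f, mem f FF → (∀ s y, PairIn isSet mem f s y → (∃ z, mem z s) → mem y s) →
        ∃ a X, mem a lam ∧ mem X Fl ∧ ∀ s y, mem s X → PairIn isSet mem f s y → y = a)

end InternalSC
/-! ### Second-order sentences over arbitrary first-order structures -/

/-- A language of second-order relation variables: `ℕ`-many symbols of every arity. -/
def V2 : Language := ⟨fun _ => Empty, fun _ => ℕ⟩

/-- A second-order sentence over the language `L`, in prenex form: a prefix of
second-order quantifiers (`true` = universal, with an arity and a variable index)
followed by a first-order matrix over `L` expanded by the relation variables. -/
structure SOSentence (L : Language) where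
  prefixQ : List (Bool × ℕ × ℕ)
  matrix : (L.sum V2).Sentence

/-- A second-order sentence is `Π¹₁` if its second-order quantifiers are all universal. -/
def SOSentence.IsPi11 {L : Language} (φ : SOSentence L) : Prop :=
  ∀ q ∈ φ.prefixQ, q.1 = true

section SOSem
variable {L : Language} {α : Type u}

/-- An assignment of the second-order relation variables. -/
def SOAssign (α : Type u) : Type u := ∀ n : ℕ, ℕ → (Fin n → α) → Prop

/-- Updating a second-order assignment at arity `n`, index `j`. -/
def updA (A : SOAssign α) (n j : ℕ) (R : (Fin n → α) → Prop) : SOAssign α :=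
  fun m i =>
    if h : m = n then
      (if i = j then fun w => R (fun t => w (Fin.cast h.symm t)) else A m i)
    else A m i

/-- The expansion of an `L`-structure by a second-order assignment. -/
def sumStructure (S : L.Structure α) (A : SOAssign α) : (L.sum V2).Structure α where
  funMap {n} f v :=
    match f with
    | Sum.inl f => @Structure.funMap L α S n f v
    | Sum.inr e => Empty.elim e
  RelMap {n} r v :=
    match r with
    | Sum.inl r => @Structure.RelMap L α S n r v
    | Sum.inr j => A n j v

/-- Satisfaction of a prenex second-order prefix-and-matrix, where the second-order
quantifiers range over the relations admitted by `Adm`. -/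
def SOSat (S : L.Structure α) (Adm : ∀ n : ℕ, ((Fin n → α) → Prop) → Prop) :
    List (Bool × ℕ × ℕ) → SOAssign α → (L.sum V2).Sentence → Prop
  | [], A, φ => RlzE (sumStructure S A) φ
  | (true, n, j) :: rest, A, φ => ∀ R, Adm n R → SOSat S Adm rest (updA A n j R) φ
  | (false, n, j) :: rest, A, φ => ∃ R, Adm n R ∧ SOSat S Adm rest (updA A n j R) φ

/-- Truth of a second-order sentence in the `L`-structure `S`, with second-order
quantifiers ranging over the relations admitted by `Adm`. -/
def SOTrueAdm (S : L.Structure α) (Adm : ∀ n : ℕ, ((Fin n → α) → Prop) → Prop)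
    (φ : SOSentence L) : Prop :=
  ∀ A : SOAssign α, SOSat S Adm φ.prefixQ A φ.matrix

/-- Truth of a second-order sentence with full second-order semantics. -/
def SOTrue (S : L.Structure α) (φ : SOSentence L) : Prop :=
  SOTrueAdm S (fun _ _ => True) φ

end SOSem

/-! ### Second-order reflective cardinals (in the ambient set theory of types) -/

section TypeWorld

/-- `P_κ lam`: the subsets of `lam` of size less than `κ`. -/
def Pkl (κ lam : Cardinal.{u}) : Type u := {s : Set lam.ord.ToType // #s < κ}

/-- `U` is a normal fine `κ`-complete ultrafilter on `P_κ lam`. -/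
def IsNFUltrafilter (κ lam : Cardinal.{u}) (U : Ultrafilter (Pkl κ lam)) : Prop :=
  (∀ (ι : Type u) (g : ι → Set (Pkl κ lam)), #ι < κ → (∀ i, g i ∈ U) → (⋂ i, g i) ∈ U) ∧
    (∀ a : lam.ord.ToType, {s : Pkl κ lam | a ∈ s.1} ∈ U) ∧
    (∀ f : Pkl κ lam → lam.ord.ToType, (∀ s : Pkl κ lam, s.1.Nonempty → f s ∈ s.1) →
      ∃ a, {s : Pkl κ lam | f s = a} ∈ U)

/-- `κ` is `lam`-supercompact: there is a normal fine `κ`-complete ultrafilter on `P_κ lam`. -/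
def IsSupercompactWith (κ lam : Cardinal.{u}) : Prop :=
  ∃ U : Ultrafilter (Pkl κ lam), IsNFUltrafilter κ lam U

/-- `κ` is supercompact: `lam`-supercompact for every `lam ≥ κ`. -/
def IsSupercompact (κ : Cardinal.{u}) : Prop :=
  ∀ lam : Cardinal.{u}, κ ≤ lam → IsSupercompactWith κ lam

/-- `κ` is nearly `lam`-supercompact (Schanker), via the normal filter characterization:
for every family of at most `lam` many subsets of `P_κ lam` and at most `lam` many
functions `P_κ lam → lam`, there is a proper `κ`-complete fine filter measuring every set
in the family and normal for the given functions. -/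
def IsNearlySupercompact (κ lam : Cardinal.{u}) : Prop :=
  ∀ (SS : Set (Set (Pkl κ lam))) (FF : Set (Pkl κ lam → lam.ord.ToType)),
    #SS ≤ lam → #FF ≤ lam →
    ∃ Fl : Filter (Pkl κ lam), Fl.NeBot ∧
      (∀ (ι : Type u) (g : ι → Set (Pkl κ lam)), #ι < κ → (∀ i, g i ∈ Fl) →
        (⋂ i, g i) ∈ Fl) ∧
      (∀ a : lam.ord.ToType, {s : Pkl κ lam | a ∈ s.1} ∈ Fl) ∧
      (∀ X ∈ SS, X ∈ Fl ∨ Xᶜ ∈ Fl) ∧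
      (∀ f ∈ FF, (∀ s : Pkl κ lam, s.1.Nonempty → f s ∈ s.1) →
        ∃ a, {s : Pkl κ lam | f s = a} ∈ Fl)

/-- `κ` is a measurable cardinal: uncountable, with a nonprincipal `κ`-complete
ultrafilter on `κ`. -/
def IsMeasurableCard (κ : Cardinal.{u}) : Prop :=
  Cardinal.aleph0 < κ ∧ ∃ U : Ultrafilter κ.ord.ToType,
    (∀ x, ¬ ({x} : Set κ.ord.ToType) ∈ U) ∧
    ∀ (ι : Type u) (g : ι → Set κ.ord.ToType), #ι < κ → (∀ i, g i ∈ U) → (⋂ i, g i) ∈ U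

/-- The substructure of an `L`-structure on a subset `m` closed under the functions. -/
def subStr {L : Language} {α : Type u} (S : L.Structure α) (m : Set α)
    (hc : ∀ {n : ℕ} (f : L.Functions n) (v : Fin n → α), (∀ i, v i ∈ m) →
      @Structure.funMap L α S n f v ∈ m) : L.Structure m where
  funMap {n} f v := ⟨@Structure.funMap L α S n f (fun i => (v i).1), hc f _ (fun i => (v i).2)⟩
  RelMap {n} R v := @Structure.RelMap L α S n R (fun i => (v i).1)

/-- `m` is (the domain of) a first-order elementary substructure of `⟨α, S⟩`. -/
def IsElemSub {L : Language} {α : Type u} (S : L.Structure α) (m : Set α)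
    (hc : ∀ {n : ℕ} (f : L.Functions n) (v : Fin n → α), (∀ i, v i ∈ m) →
      @Structure.funMap L α S n f v ∈ m) : Prop :=
  ∀ (k : ℕ) (ψ : L.Formula (Fin k)) (as : Fin k → m),
    RlzF (subStr S m hc) ψ as ↔ RlzF S ψ (fun i => (as i).1)

/-- The general reflectivity notion: every second-order sentence `φ` satisfying `P`,
true in a structure `M` in a language of size less than `κ`, whose domain contains `κ`
and whose size satisfies `sz`, is true in a first-order elementary substructure `m ≺ M`
of size less than `κ` with `m ∩ κ ∈ κ`. -/
def ReflectiveGen (κ : Cardinal.{u}) (sz : Cardinal.{u} → Prop)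
    (P : (L : FirstOrder.Language.{u, u}) → SOSentence L → Prop) : Prop :=
  ∀ (L : FirstOrder.Language.{u, u}) (α : Type u) (S : L.Structure α) (o : κ.ord.ToType ↪ α),
    L.card < κ → sz (#α) →
    ∀ φ : SOSentence L, P L φ → SOTrue S φ →
      ∃ (m : Set α) (hc : ∀ {n : ℕ} (f : L.Functions n) (v : Fin n → α),
          (∀ i, v i ∈ m) → @Structure.funMap L α S n f v ∈ m),
        #m < κ ∧ IsElemSub S m hc ∧
        (∃ g : κ.ord.ToType, ∀ b, (o b ∈ m ↔ b < g)) ∧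
        SOTrue (subStr S m hc) φ

/-- `κ` is second-order `lam`-reflective. -/
def SOLamReflective (κ lam : Cardinal.{u}) : Prop :=
  ReflectiveGen κ (fun c => c = lam) (fun _ _ => True)

/-- `κ` is `lam`-reflective for `Π¹₁` assertions. -/
def Pi11LamReflective (κ lam : Cardinal.{u}) : Prop :=
  ReflectiveGen κ (fun c => c = lam) (fun _ φ => φ.IsPi11)

/-- `κ` is second-order reflective (for structures of any size). -/
def SOReflective (κ : Cardinal.{u}) : Prop :=
  ReflectiveGen κ (fun _ => True) (fun _ _ => True)

/-- `κ` is reflective for `Π¹₁` assertions. -/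
def Pi11Reflective (κ : Cardinal.{u}) : Prop :=
  ReflectiveGen κ (fun _ => True) (fun _ φ => φ.IsPi11)

end TypeWorld
/-! ### Internal second-order reflectivity of a cardinal inside a model -/

section InternalRefl
variable {M : Type u} (isSet : M → Prop) (mem : M → M → Prop)

/-- The external (relational) language whose relation symbols are the members of the
internal index set `ι`, with arities given by `ar`. -/
def LofInternal (ι : M) (ar : {i : M // mem i ι} → ℕ) : Language :=
  ⟨fun _ => Empty, fun n => {i : {i : M // mem i ι} // ar i = n}⟩

instance (ι : M) (ar : {i : M // mem i ι} → ℕ) : (LofInternal mem ι ar).IsRelational :=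
  fun _ => inferInstanceAs (IsEmpty Empty)

/-- The structure on the members of the domain `d` interpreting each relation symbol
`i` by the tuples (coded as iterated pairs) appearing in the interpretation `r` paired
with `i`. -/
def strInternal (ι : M) (ar : {i : M // mem i ι} → ℕ) (d r : M) :
    (LofInternal mem ι ar).Structure {x : M // mem x d} where
  funMap f _ := Empty.elim f
  RelMap {n} R v :=
    ∃ t, CodesTuple isSet mem n t (fun i => (v i).1) ∧ PairIn isSet mem r R.1.1 t

/-- The relations on the members of `d` coded by an entity satisfying `Good`
(e.g. by a set, or by a class): the admissible relations for internal second-order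
quantification. -/
def CodedRel (Good : M → Prop) (d : M) (n : ℕ) (R : (Fin n → {x : M // mem x d}) → Prop) :
    Prop :=
  ∃ r, Good r ∧ ∀ v, R v ↔ ∃ t, CodesTuple isSet mem n t (fun i => (v i).1) ∧ mem t r

/-- First-order elementarity of the (internal) subset `m ⊆ d` in the structure
determined by `(d, r)`. -/
def InternalElemSub (ι : M) (ar : {i : M // mem i ι} → ℕ) (d r m : M) : Prop :=
  ∀ (k : ℕ) (ψ : (LofInternal mem ι ar).Formula (Fin k)) (as : Fin k → {x : M // mem x m})
    (h : ∀ i, mem (as i).1 d),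
    RlzF (strInternal isSet mem ι ar m r) ψ as ↔
      RlzF (strInternal isSet mem ι ar d r) ψ (fun i => ⟨(as i).1, h i⟩)

/-- `m ∩ κ` is an ordinal below `κ`. -/
def CutsKappa (κ m : M) : Prop :=
  ∃ γ, mem γ κ ∧ ∀ x, (mem x m ∧ mem x κ) ↔ mem x γ

/-- Internal reflectivity of `κ` for structures with a set domain: every second-order
sentence (satisfying `P`) in an internal language of size less than `κ`, true in an
internal structure whose domain is a set containing `κ` and satisfying the size
constraint `sz`, with second-order quantifiers ranging over the set-coded relations,
is true in a first-order elementary substructure `m` of size less than `κ` with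
`m ∩ κ ∈ κ`. -/
def InternallyReflective (κ : M) (sz : M → Prop)
    (P : ∀ (ι : M) (ar : {i : M // mem i ι} → ℕ), SOSentence (LofInternal mem ι ar) → Prop) :
    Prop :=
  ∀ (ι : M), isSet ι → SizeLt isSet mem ι κ →
  ∀ (ar : {i : M // mem i ι} → ℕ) (d r : M),
    isSet d → (∀ β, mem β κ → mem β d) → sz d → isSet r →
    ∀ φ : SOSentence (LofInternal mem ι ar), P ι ar φ →
      SOTrueAdm (strInternal isSet mem ι ar d r) (CodedRel isSet mem isSet d) φ →
      ∃ m, isSet m ∧ SubsetS mem m d ∧ SizeLt isSet mem m κ ∧ CutsKappa mem κ m ∧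
        InternalElemSub isSet mem ι ar d r m ∧
        SOTrueAdm (strInternal isSet mem ι ar m r) (CodedRel isSet mem isSet m) φ

/-- `κ` is (internally) second-order `lam`-reflective: reflectivity for structures of
size `lam`. -/
def InternallyLamReflective (κ lam : M) : Prop :=
  InternallyReflective isSet mem κ (fun d => EquinumerousI isSet mem d lam)
    (fun _ _ _ => True)

/-- `κ` is (internally) `lam`-reflective for `Π¹₁` assertions. -/
def InternallyLamReflectivePi11 (κ lam : M) : Prop :=
  InternallyReflective isSet mem κ (fun d => EquinumerousI isSet mem d lam)
    (fun _ _ φ => φ.IsPi11)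

end InternalRefl

section InternalReflClass
variable {M : Type u} (isClass atom : M → Prop) (mem : M → M → Prop)

/-- Internal second-order `Ord`-reflectivity of `κ` inside a class model: every
second-order sentence (satisfying `P`) in an internal language of size less than `κ`,
true in a class structure whose domain is a class `X ⊇ κ`, with interpretation coded by
a class and second-order quantifiers ranging over the class-coded relations, is true in
a first-order elementary set-sized substructure `m` of size less than `κ` with
`m ∩ κ ∈ κ`, with second-order quantifiers over the set-coded relations. -/
def OrdReflectiveGen (κ : M)
    (P : ∀ (ι : M) (ar : {i : M // mem i ι} → ℕ), SOSentence (LofInternal mem ι ar) → Prop) :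
    Prop :=
  ∀ (ι : M), IsSetO isClass atom ι → SizeLt (IsSetO isClass atom) mem ι κ →
  ∀ (ar : {i : M // mem i ι} → ℕ) (X r : M),
    isClass X → (∀ β, mem β κ → mem β X) → isClass r →
    ∀ φ : SOSentence (LofInternal mem ι ar), P ι ar φ →
      SOTrueAdm (strInternal (IsSetO isClass atom) mem ι ar X r)
        (CodedRel (IsSetO isClass atom) mem isClass X) φ →
      ∃ m, IsSetO isClass atom m ∧ SubsetS mem m X ∧
        SizeLt (IsSetO isClass atom) mem m κ ∧ CutsKappa mem κ m ∧
        InternalElemSub (IsSetO isClass atom) mem ι ar X r m ∧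
        SOTrueAdm (strInternal (IsSetO isClass atom) mem ι ar m r)
          (CodedRel (IsSetO isClass atom) mem (IsSetO isClass atom) m) φ

/-- `κ` is second-order `Ord`-reflective (inside a class model). -/
def OrdReflective (κ : M) : Prop :=
  OrdReflectiveGen isClass atom mem κ (fun _ _ _ => True)

/-- `κ` is `Ord`-reflective for `Π¹₁` assertions (inside a class model). -/
def OrdReflectivePi11 (κ : M) : Prop :=
  OrdReflectiveGen isClass atom mem κ (fun _ _ φ => φ.IsPi11)

end InternalReflClass
/-! ### Interpretations and bi-interpretations -/

section Interp

/-- An interpretation of the (relational) language `L'` in the (relational) language `L`: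
a parameter type `π`, a dimension type `α`, and `L`-formulas defining the domain of
`α`-tuples, an equivalence on them, and the interpretation of each `L'`-relation. -/
structure Interp (L L' : FirstOrder.Language.{0, 0}) : Type 1 where
  π : Type
  α : Type
  dom : L.Formula (π ⊕ α)
  eqv : L.Formula (π ⊕ (α ⊕ α))
  rel : ∀ ⦃n : ℕ⦄, L'.Relations n → L.Formula (π ⊕ (Fin n × α))

variable {L L' : FirstOrder.Language.{0, 0}}

/-- The tuples satisfying the domain formula of an interpretation. -/
def Interp.Dom (I : Interp L L') {M : Type} (S : L.Structure M) (pv : I.π → M) : Type :=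
  {v : I.α → M // RlzF S I.dom (Sum.elim pv v)}

/-- The interpreted equivalence on domain tuples. -/
def Interp.eqvRel (I : Interp L L') {M : Type} (S : L.Structure M) (pv : I.π → M) :
    I.Dom S pv → I.Dom S pv → Prop :=
  fun v w => RlzF S I.eqv (Sum.elim pv (Sum.elim v.1 w.1))

/-- The carrier of the interpreted structure: domain tuples up to interpreted equivalence. -/
def Interp.Carrier (I : Interp L L') {M : Type} (S : L.Structure M) (pv : I.π → M) : Type :=
  Quot (I.eqvRel S pv)

/-- The class of a domain tuple in the interpreted structure. -/
def Interp.cls (I : Interp L L') {M : Type} (S : L.Structure M) (pv : I.π → M)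
    (v : I.Dom S pv) : I.Carrier S pv :=
  Quot.mk _ v

/-- The interpreted `L'`-structure. -/
def Interp.str [L'.IsRelational] (I : Interp L L') {M : Type} (S : L.Structure M)
    (pv : I.π → M) : L'.Structure (I.Carrier S pv) where
  funMap f := isEmptyElim f
  RelMap {n} R q :=
    ∃ v : Fin n → I.Dom S pv, (∀ i, I.cls S pv (v i) = q i) ∧
      RlzF S (I.rel R) (Sum.elim pv (fun p : Fin n × I.α => (v p.1).1 p.2))

/-- `raw : J.α × I.α → M` represents the element `z` of the twice-interpreted structure
`J(I(M))`. -/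
def Reps2 [L'.IsRelational] (I : Interp L L') (J : Interp L' L) {M : Type}
    (S : L.Structure M) (pv : I.π → M) (qv : J.π → I.Carrier S pv)
    (raw : J.α × I.α → M) (z : J.Carrier (I.str S pv) qv) : Prop :=
  ∃ (h : ∀ b : J.α, RlzF S I.dom (Sum.elim pv (fun a => raw (b, a))))
    (hd : RlzF (I.str S pv) J.dom
      (Sum.elim qv (fun b => I.cls S pv ⟨fun a => raw (b, a), h b⟩))),
    z = J.cls (I.str S pv) qv ⟨fun b => I.cls S pv ⟨fun a => raw (b, a), h b⟩, hd⟩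

/-- An isomorphism between two structures for a relational language. -/
structure RelEquiv {A B : Type} {L'' : FirstOrder.Language.{0, 0}} (SA : L''.Structure A) (SB : L''.Structure B) where
  toEquiv : A ≃ B
  rel_iff : ∀ {n : ℕ} (R : L''.Relations n) (v : Fin n → A),
    (@Structure.RelMap L'' B SB n R (fun i => toEquiv (v i)) ↔ @Structure.RelMap L'' A SA n R v)

/-- A class of structures in the language `L` (a theory, presented semantically). -/
def StructClass (L : FirstOrder.Language.{0, 0}) : Type 1 := ∀ (M : Type) (_ : L.Structure M), Prop

/-- A mutual interpretation of the theory `CB` with the theory `CA`: uniform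
interpretations carrying each model of the one theory to a model of the other,
allowing parameters. -/
structure TheoryMutInterp {LA LB : FirstOrder.Language.{0, 0}} [LA.IsRelational] [LB.IsRelational]
    (CA : StructClass LA) (CB : StructClass LB) : Type 1 where
  I : Interp LA LB
  J : Interp LB LA
  interpA : ∀ (M : Type) (S : LA.Structure M), CA M S →
    ∃ pv : I.π → M, CB (I.Carrier S pv) (I.str S pv)
  interpB : ∀ (N : Type) (T : LB.Structure N), CB N T →
    ∃ qv : J.π → N, CA (J.Carrier T qv) (J.str T qv)

/-- The condition that a model `M` of the first theory definably sees the isomorphism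
with its copy inside the interpreted model: there is an isomorphism of `M` with
`J(I(M))` whose graph is uniformly definable (from parameters) by the formula `γ`. -/
def SeesIso {LA LB : FirstOrder.Language.{0, 0}} [LA.IsRelational] [LB.IsRelational]
    (I : Interp LA LB) (J : Interp LB LA) (γp : Type)
    (γ : LA.Formula (γp ⊕ (Unit ⊕ (J.α × I.α)))) (M : Type) (S : LA.Structure M) : Prop :=
  ∃ (pv : I.π → M) (qv : J.π → I.Carrier S pv) (gp : γp → M)
    (c : RelEquiv S (J.str (I.str S pv) qv)),
    ∀ (x : M) (raw : J.α × I.α → M),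
      RlzF S γ (Sum.elim gp (Sum.elim (fun _ => x) raw)) ↔
        Reps2 I J S pv qv raw (c.toEquiv x)

/-- A bi-interpretation of the theories `CA` and `CB` (allowing parameters): mutual
uniform interpretations such that every model of either theory definably sees the
isomorphism of itself with its copy inside the composite interpreted model. -/
structure TheoryBiInterp {LA LB : FirstOrder.Language.{0, 0}} [LA.IsRelational] [LB.IsRelational]
    (CA : StructClass LA) (CB : StructClass LB) extends TheoryMutInterp CA CB : Type 1 where
  γp : Type
  γ : LA.Formula (γp ⊕ (Unit ⊕ (J.α × I.α)))
  δp : Type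
  δ : LB.Formula (δp ⊕ (Unit ⊕ (I.α × J.α)))
  seesA : ∀ (M : Type) (S : LA.Structure M), CA M S → SeesIso I J γp γ M S
  seesB : ∀ (N : Type) (T : LB.Structure N), CB N T → SeesIso J I δp δ N T

/-- A bi-interpretation is parameter-free when all its parameter types are empty. -/
def TheoryBiInterp.ParamFree {LA LB : FirstOrder.Language.{0, 0}} [LA.IsRelational] [LB.IsRelational]
    {CA : StructClass LA} {CB : StructClass LB} (B : TheoryBiInterp CA CB) : Prop :=
  IsEmpty B.I.π ∧ IsEmpty B.J.π ∧ IsEmpty B.γp ∧ IsEmpty B.δp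

/-- A semi-bi-interpretation: a mutual interpretation in which the models of the first
theory definably see the isomorphism with their copies. -/
structure TheorySemiBiInterp {LA LB : FirstOrder.Language.{0, 0}} [LA.IsRelational] [LB.IsRelational]
    (CA : StructClass LA) (CB : StructClass LB) extends TheoryMutInterp CA CB : Type 1 where
  γp : Type
  γ : LA.Formula (γp ⊕ (Unit ⊕ (J.α × I.α)))
  seesA : ∀ (M : Type) (S : LA.Structure M), CA M S → SeesIso I J γp γ M S

/-- A mutual interpretation is parameter-free when its parameter types are empty. -/
def TheoryMutInterp.ParamFree {LA LB : FirstOrder.Language.{0, 0}} [LA.IsRelational] [LB.IsRelational]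
    {CA : StructClass LA} {CB : StructClass LB} (B : TheoryMutInterp CA CB) : Prop :=
  IsEmpty B.I.π ∧ IsEmpty B.J.π

/-- A bi-interpretation of two individual structures (allowing parameters):
interpretations each way, isomorphisms of each structure with its interpreted copy in
the other, such that each structure definably sees the isomorphism of itself with its
copy inside the composite. -/
structure StructBiInterp {LA LB : FirstOrder.Language.{0, 0}} [LA.IsRelational] [LB.IsRelational]
    {M N : Type} (S : LA.Structure M) (T : LB.Structure N) : Type 1 where
  I : Interp LA LB
  J : Interp LB LA
  pv : I.π → M
  qv : J.π → N
  e : RelEquiv (I.str S pv) T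
  f : RelEquiv (J.str T qv) S
  γp : Type
  γ : LA.Formula (γp ⊕ (Unit ⊕ (J.α × I.α)))
  δp : Type
  δ : LB.Formula (δp ⊕ (Unit ⊕ (I.α × J.α)))
  seesA : SeesIso I J γp γ M S
  seesB : SeesIso J I δp δ N T

end Interp
/-! ### Extracting the relations from structures in the concrete languages -/

section Extract
variable {M : Type}

def memLST (S : LST.Structure M) : M → M → Prop :=
  fun x y => @Structure.RelMap LST M S 2 (() : Unit) ![x, y]

def atomLU (S : LU.Structure M) : M → Prop :=
  fun x => @Structure.RelMap LU M S 1 (() : Unit) ![x]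

def memLU (S : LU.Structure M) : M → M → Prop :=
  fun x y => @Structure.RelMap LU M S 2 (() : Unit) ![x, y]

def memLUvec (S : LUvec.Structure M) : M → M → Prop :=
  fun x y => @Structure.RelMap LUvec M S 2 (false : Bool) ![x, y]

def avecLUvec (S : LUvec.Structure M) : M → M → Prop :=
  fun x y => @Structure.RelMap LUvec M S 2 (true : Bool) ![x, y]

def isClassL2 (S : L2.Structure M) : M → Prop :=
  fun x => @Structure.RelMap L2 M S 1 (() : Unit) ![x]

def memL2 (S : L2.Structure M) : M → M → Prop :=
  fun x y => @Structure.RelMap L2 M S 2 (() : Unit) ![x, y]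

def isClassL2U (S : L2U.Structure M) : M → Prop :=
  fun x => @Structure.RelMap L2U M S 1 (false : Bool) ![x]

def atomL2U (S : L2U.Structure M) : M → Prop :=
  fun x => @Structure.RelMap L2U M S 1 (true : Bool) ![x]

def memL2U (S : L2U.Structure M) : M → M → Prop :=
  fun x y => @Structure.RelMap L2U M S 2 (() : Unit) ![x, y]

end Extract

/-!
Call `d` *blocked* when some set `s` meets every set of atoms equinumerous with `d`. If no set
of atoms is blocked, `u = ∅` works. Otherwise well-order a blocked set of atoms and pass to its
least blocked initial segment `d`, blocked by `s`, and take `u = s`. Given a set of atoms `w`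
disjoint from `s`, compare the well-orders of `w` and `d`: an injection of `d` into `w` would give
a copy of `d` missing `s`, so `w` injects into a proper initial segment of `d`. That segment is
not blocked, hence has a copy missing `s ∪ w`, and the image of `w` in it is the required `w'`.
-/

section Generic

variable {M : Type u} {isSet : M → Prop} {mem : M → M → Prop}

local notation "⟪" x ", " y "⟫" " ∈ " r:50 => PairIn isSet mem r x y

theorem IsOPair.inj {p x y x' y' : M} (h : IsOPair isSet mem p x y)
    (h' : IsOPair isSet mem p x' y') : x = x' ∧ y = y' := by
  obtain ⟨-, s, d, -, -, hp, hs, hd⟩ := h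
  obtain ⟨-, s', d', -, -, hp', hs', hd'⟩ := h'
  have hx : x = x' := by
    rcases (hp' s).1 ((hp s).2 (Or.inl rfl)) with rfl | rfl
    · exact (hs' x).1 ((hs x).2 rfl)
    · rcases (hd' x).1 ((hs x).2 rfl) with h | h
      · exact h
      · exact ((hs x').1 ((hd' x').2 (Or.inl rfl))).symm
  subst hx
  refine ⟨rfl, ?_⟩
  rcases (hp' d).1 ((hp d).2 (Or.inr rfl)) with rfl | rfl
  · have hyx : y = x := (hs' y).1 ((hd y).2 (Or.inr rfl))
    rcases (hp d').1 ((hp' d').2 (Or.inr rfl)) with rfl | rfl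
    · rw [hyx, (hs y').1 ((hd' y').2 (Or.inr rfl))]
    · rcases (hd y').1 ((hd' y').2 (Or.inr rfl)) with h | h
      · rw [hyx, h]
      · exact h.symm
  · rcases (hd' y).1 ((hd y).2 (Or.inr rfl)) with h | h
    · rcases (hd y').1 ((hd' y').2 (Or.inr rfl)) with h' | h'
      · rw [h, h']
      · exact h'.symm
    · exact h

section Functions

variable {f a b x y : M}

theorem IsFuncOn.exists_pairIn (hf : IsFuncOn isSet mem f a) (hx : mem x a) : ∃ y, ⟪x, y⟫ ∈ f :=
  hf.2.2.1 x hx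

theorem IsFuncOn.functional {y' : M} (hf : IsFuncOn isSet mem f a) (h : ⟪x, y⟫ ∈ f)
    (h' : ⟪x, y'⟫ ∈ f) : y = y' :=
  hf.2.2.2 x y y' h h'

theorem IsFuncOn.mem_dom (hf : IsFuncOn isSet mem f a) (h : ⟪x, y⟫ ∈ f) : mem x a := by
  obtain ⟨p, hpf, hp⟩ := h
  obtain ⟨x', y', hx', hp'⟩ := hf.2.1 p hpf
  exact (hp.inj hp').1 ▸ hx'

theorem IsInjFuncInto.mem_cod (hf : IsInjFuncInto isSet mem f a b) (h : ⟪x, y⟫ ∈ f) : mem y b :=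
  hf.2.1 x y h

theorem IsInjFuncInto.injective {x' : M} (hf : IsInjFuncInto isSet mem f a b) (h : ⟪x, y⟫ ∈ f)
    (h' : ⟪x', y⟫ ∈ f) : x = x' :=
  hf.2.2 x x' y h h'

theorem IsInjFuncInto.mono_cod {c : M} (hf : IsInjFuncInto isSet mem f a b)
    (hc : ∀ x y, ⟪x, y⟫ ∈ f → mem y c) : IsInjFuncInto isSet mem f a c :=
  ⟨hf.1, hc, hf.2.2⟩

end Functions

section WellOrders

variable {r w x y z : M}

theorem IsWellOrderOn.mem_of_pairIn (hw : IsWellOrderOn isSet mem r w) (h : ⟪x, y⟫ ∈ r) :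
    mem x w ∧ mem y w := by
  obtain ⟨p, hpr, hp⟩ := h
  obtain ⟨x', y', hx', hy', hp'⟩ := hw.2.1 p hpr
  obtain ⟨rfl, rfl⟩ := hp.inj hp'
  exact ⟨hx', hy'⟩

theorem IsWellOrderOn.irrefl (hw : IsWellOrderOn isSet mem r w) (x : M) : ¬ ⟪x, x⟫ ∈ r :=
  fun h => hw.2.2.1 x (hw.mem_of_pairIn h).1 h

theorem IsWellOrderOn.trans (hw : IsWellOrderOn isSet mem r w) (h : ⟪x, y⟫ ∈ r)
    (h' : ⟪y, z⟫ ∈ r) : ⟪x, z⟫ ∈ r :=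
  hw.2.2.2.1 x y z h h'

theorem IsWellOrderOn.asymm (hw : IsWellOrderOn isSet mem r w) (h : ⟪x, y⟫ ∈ r) :
    ¬ ⟪y, x⟫ ∈ r :=
  fun h' => hw.irrefl x (hw.trans h h')

theorem IsWellOrderOn.total (hw : IsWellOrderOn isSet mem r w) (hx : mem x w) (hy : mem y w) :
    x = y ∨ ⟪x, y⟫ ∈ r ∨ ⟪y, x⟫ ∈ r :=
  hw.2.2.2.2.1 x y hx hy

theorem IsWellOrderOn.exists_least {s : M} (hw : IsWellOrderOn isSet mem r w) (hs : isSet s)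
    (hne : ∃ x, mem x s) (hsw : ∀ x, mem x s → mem x w) :
    ∃ m, mem m s ∧ ∀ x, mem x s → x = m ∨ ⟪m, x⟫ ∈ r :=
  hw.2.2.2.2.2 s hs hne hsw

end WellOrders

end Generic

section Definability

/-- The assignment `v` extended by a new variable `0`. Variables are de Bruijn indices: under
`k` quantifiers, variable `i` of the enclosing formula is referred to as `i + k`. -/
def cons {M : Type*} (y : M) (v : ℕ → M) : ℕ → M
  | 0 => y
  | n + 1 => v n

/-- Makes variable `0` of a formula bound and shifts the others down. -/
def bindZero (k : ℕ) (i : Fin k) : Fin k ⊕ Fin 1 :=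
  if h : (i : ℕ) = 0 then .inr 0 else .inl ⟨i - 1, by omega⟩

theorem realize_relabel_bindZero {M : Type*} [LU.Structure M] {k n : ℕ}
    (φ : LU.BoundedFormula (Fin k) n) (v : ℕ → M) (xs : Fin (1 + n) → M) :
    (φ.relabel (bindZero k)).Realize (fun i => v i) xs ↔
      φ.Realize (fun i => cons (xs 0) v i) (xs ∘ Fin.natAdd 1) := by
  rw [BoundedFormula.realize_relabel]
  refine iff_of_eq (congrArg (φ.Realize · _) (funext fun i => ?_))
  rcases i with ⟨_ | i, hi⟩
  · rfl
  · simp [bindZero, cons]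

def LUDefinable {M : Type u} (atom : M → Prop) (mem : M → M → Prop) (P : (ℕ → M) → Prop) :
    Prop :=
  ∃ (k : ℕ) (φ : LU.Formula (Fin k)), ∀ v : ℕ → M,
    (letI := strLU atom mem; φ.Realize (fun i => v i)) ↔ P v

namespace LUDefinable

variable {M : Type u} {atom : M → Prop} {mem : M → M → Prop} {P Q : (ℕ → M) → Prop}

theorem of_iff (h : LUDefinable atom mem P) (hPQ : ∀ v, Q v ↔ P v) : LUDefinable atom mem Q := by
  obtain ⟨k, φ, hφ⟩ := h
  exact ⟨k, φ, fun v => (hφ v).trans (hPQ v).symm⟩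

theorem mem_var (i j : ℕ) : LUDefinable atom mem (fun v => mem (v i) (v j)) :=
  ⟨max i j + 1, Relations.formula₂ (() : LU.Relations 2)
    (Term.var ⟨i, by omega⟩) (Term.var ⟨j, by omega⟩), fun _ => by
      let _ := strLU atom mem; exact Formula.realize_rel₂⟩

theorem atom_var (i : ℕ) : LUDefinable atom mem (fun v => atom (v i)) :=
  ⟨i + 1, Relations.formula₁ (() : LU.Relations 1) (Term.var ⟨i, by omega⟩),
    fun _ => by let _ := strLU atom mem; exact Formula.realize_rel₁⟩

theorem eq_var (i j : ℕ) : LUDefinable atom mem (fun v => v i = v j) :=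
  ⟨max i j + 1, (Term.var ⟨i, by omega⟩).equal (Term.var ⟨j, by omega⟩),
    fun _ => by let _ := strLU atom mem; exact Formula.realize_equal⟩

theorem not (h : LUDefinable atom mem P) : LUDefinable atom mem (fun v => ¬ P v) := by
  obtain ⟨k, φ, hφ⟩ := h
  exact ⟨k, φ.not, fun v => not_congr (hφ v)⟩

theorem and (hP : LUDefinable atom mem P) (hQ : LUDefinable atom mem Q) :
    LUDefinable atom mem (fun v => P v ∧ Q v) := by
  obtain ⟨k, φ, hφ⟩ := hP
  obtain ⟨l, ψ, hψ⟩ := hQ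
  refine ⟨max k l, φ.relabel (Fin.castLE (le_max_left k l)) ⊓
    ψ.relabel (Fin.castLE (le_max_right k l)), fun v => ?_⟩
  let _ := strLU atom mem
  simp only [Formula.realize_inf, Formula.realize_relabel]
  exact and_congr (hφ v) (hψ v)

theorem exists_cons (h : LUDefinable atom mem P) :
    LUDefinable atom mem (fun v => ∃ y, P (cons y v)) := by
  obtain ⟨k, φ, hφ⟩ := h
  refine ⟨k, (BoundedFormula.relabel (bindZero k) φ : LU.BoundedFormula (Fin k) 1).ex,
    fun v => ?_⟩
  let _ := strLU atom mem
  refine BoundedFormula.realize_ex.trans (exists_congr fun y => ?_)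
  rw [realize_relabel_bindZero, ← hφ, Formula.Realize, Subsingleton.elim (_ ∘ _) default]
  exact Iff.rfl

theorem comp (h : LUDefinable atom mem P) (σ : ℕ → ℕ) :
    LUDefinable atom mem (fun v => P (v ∘ σ)) := by
  obtain ⟨k, φ, hφ⟩ := h
  have hσ (i : Fin k) : σ i < Finset.univ.sup (fun j : Fin k => σ j) + 1 :=
    Nat.lt_succ_of_le (Finset.le_sup (f := fun j : Fin k => σ j) (Finset.mem_univ i))
  refine ⟨_, φ.relabel fun i : Fin k => (⟨σ i, hσ i⟩ : Fin _), fun v => ?_⟩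
  let _ := strLU atom mem
  exact Formula.realize_relabel.trans (hφ (v ∘ σ))

theorem or (hP : LUDefinable atom mem P) (hQ : LUDefinable atom mem Q) :
    LUDefinable atom mem (fun v => P v ∨ Q v) :=
  (hP.not.and hQ.not).not.of_iff fun _ => by tauto

theorem imp (hP : LUDefinable atom mem P) (hQ : LUDefinable atom mem Q) :
    LUDefinable atom mem (fun v => P v → Q v) :=
  (hP.and hQ.not).not.of_iff fun _ => by tauto

theorem iff (hP : LUDefinable atom mem P) (hQ : LUDefinable atom mem Q) :
    LUDefinable atom mem (fun v => P v ↔ Q v) :=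
  ((hP.imp hQ).and (hQ.imp hP)).of_iff fun _ => iff_iff_implies_and_implies

theorem forall_cons (h : LUDefinable atom mem P) :
    LUDefinable atom mem (fun v => ∀ y, P (cons y v)) :=
  h.not.exists_cons.not.of_iff fun _ => not_exists_not.symm

theorem isOPair (i j k : ℕ) :
    LUDefinable atom mem (fun v => IsOPair (fun z => ¬ atom z) mem (v i) (v j) (v k)) :=
  (atom_var i).not.and <| exists_cons <| exists_cons <| (atom_var 1).not.and <|
    (atom_var 0).not.and <|
    (forall_cons <| (mem_var 0 (i + 3)).iff ((eq_var 0 2).or (eq_var 0 1))).and <|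
    (forall_cons <| (mem_var 0 2).iff (eq_var 0 (j + 3))).and <|
    forall_cons <| (mem_var 0 1).iff ((eq_var 0 (j + 3)).or (eq_var 0 (k + 3)))

theorem pairIn (i j k : ℕ) :
    LUDefinable atom mem (fun v => PairIn (fun z => ¬ atom z) mem (v i) (v j) (v k)) :=
  exists_cons <| (mem_var 0 (i + 1)).and (isOPair 0 (j + 1) (k + 1))

theorem setOfAtoms (i : ℕ) : LUDefinable atom mem (fun v => SetOfAtoms atom mem (v i)) :=
  (atom_var i).not.and <| forall_cons <| (mem_var 0 (i + 1)).imp (atom_var 0)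

theorem disjointS (i j : ℕ) : LUDefinable atom mem (fun v => DisjointS mem (v i) (v j)) :=
  (exists_cons <| (mem_var 0 (i + 1)).and (mem_var 0 (j + 1))).not

theorem isFuncOn (i j : ℕ) :
    LUDefinable atom mem (fun v => IsFuncOn (fun z => ¬ atom z) mem (v i) (v j)) :=
  (atom_var i).not.and <|
    (forall_cons <| (mem_var 0 (i + 1)).imp <| exists_cons <| exists_cons <|
      (mem_var 1 (j + 3)).and (isOPair 2 1 0)).and <|
    (forall_cons <| (mem_var 0 (j + 1)).imp <| exists_cons <| pairIn (i + 2) 1 0).and <|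
    forall_cons <| forall_cons <| forall_cons <|
      (pairIn (i + 3) 2 1).imp <| (pairIn (i + 3) 2 0).imp (eq_var 1 0)

theorem isInjFuncInto (i j k : ℕ) :
    LUDefinable atom mem (fun v => IsInjFuncInto (fun z => ¬ atom z) mem (v i) (v j) (v k)) :=
  (isFuncOn i j).and <|
    (forall_cons <| forall_cons <| (pairIn (i + 2) 1 0).imp (mem_var 0 (k + 2))).and <|
    forall_cons <| forall_cons <| forall_cons <|
      (pairIn (i + 3) 2 0).imp <| (pairIn (i + 3) 1 0).imp (eq_var 2 1)

theorem equinumerousI (i j : ℕ) :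
    LUDefinable atom mem (fun v => EquinumerousI (fun z => ¬ atom z) mem (v i) (v j)) :=
  exists_cons <| (isInjFuncInto 0 (i + 1) (j + 1)).and <| forall_cons <|
    (mem_var 0 (j + 2)).imp <| exists_cons <| (mem_var 0 (i + 3)).and (pairIn 2 0 1)

end LUDefinable

end Definability

section ZFUSets

variable {M : Type u} {atom : M → Prop} {mem : M → M → Prop}

local notation "⟪" x ", " y "⟫" " ∈ " r:50 => PairIn (fun z => ¬ atom z) mem r x y

open LUDefinable

theorem exists_sep (hsep : SeparationScheme atom mem LU (strLU atom mem))
    {P : (ℕ → M) → Prop} (hP : LUDefinable atom mem P) (v : ℕ → M) (a : M) :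
    ∃ b, ¬ atom b ∧ ∀ x, mem x b ↔ mem x a ∧ P (cons x v) := by
  obtain ⟨k, φ, hφ⟩ := hP
  obtain ⟨b, hb, hbx⟩ := hsep k (BoundedFormula.relabel (bindZero k) φ) (fun i => v i) a
  refine ⟨b, hb, fun x => (hbx x).trans (and_congr_right fun _ => ?_)⟩
  let _ := strLU atom mem
  rw [← hφ, Formula.Realize]
  refine (realize_relabel_bindZero φ v ![x]).trans ?_
  rw [Subsingleton.elim (α := Fin 0 → M) (_ ∘ _) default]
  rfl

theorem exists_coll (hcoll : CollectionScheme atom mem LU (strLU atom mem))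
    {P : (ℕ → M) → Prop} (hP : LUDefinable atom mem P) (v : ℕ → M) (a : M)
    (h : ∀ x, mem x a → ∃ y, P (cons y (cons x v))) :
    ∃ b, ¬ atom b ∧ ∀ x, mem x a → ∃ y, mem y b ∧ P (cons y (cons x v)) := by
  obtain ⟨k, φ, hφ⟩ := hP
  let ψ : LU.BoundedFormula (Fin k) 2 :=
    BoundedFormula.relabel (bindZero k) (BoundedFormula.relabel (bindZero k) φ)
  have hψ (x y : M) : Rlz (strLU atom mem) ψ (fun i => v i) ![x, y] ↔ P (cons y (cons x v)) := by
    let _ := strLU atom mem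
    rw [← hφ, Formula.Realize]
    refine (realize_relabel_bindZero _ v _).trans ((realize_relabel_bindZero φ _ _).trans ?_)
    rw [Subsingleton.elim (α := Fin 0 → M) (_ ∘ _) default]
    rfl
  obtain ⟨b, hb, hbx⟩ := hcoll k ψ (fun i => v i) a fun x hx => (h x hx).imp fun y => (hψ x y).2
  exact ⟨b, hb, fun x hx => (hbx x hx).imp fun y hy => ⟨hy.1, (hψ x y).1 hy.2⟩⟩

theorem exists_emptyset (hinf : InfinityAx atom mem) : ∃ e, ¬ atom e ∧ ∀ z, ¬ mem z e := by
  obtain ⟨-, -, ⟨e, -, he, hez⟩, -⟩ := hinf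
  exact ⟨e, he, hez⟩

theorem exists_union (hpair : PairingAx atom mem) (hunion : UnionAx atom mem) (x y : M) :
    ∃ u, ¬ atom u ∧ ∀ z, mem z u ↔ mem z x ∨ mem z y := by
  obtain ⟨p, -, hp⟩ := hpair x y
  obtain ⟨u, hu, huz⟩ := hunion p
  refine ⟨u, hu, fun z => (huz z).trans ⟨?_, ?_⟩⟩
  · rintro ⟨s, hs, hzs⟩
    rcases (hp s).1 hs with rfl | rfl
    exacts [Or.inl hzs, Or.inr hzs]
  · rintro (hz | hz)
    exacts [⟨x, (hp x).2 (Or.inl rfl), hz⟩, ⟨y, (hp y).2 (Or.inr rfl), hz⟩]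

theorem exists_isOPair (hpair : PairingAx atom mem) (x y : M) :
    ∃ p, IsOPair (fun z => ¬ atom z) mem p x y := by
  obtain ⟨s, hs, hsz⟩ := hpair x x
  obtain ⟨d, hd, hdz⟩ := hpair x y
  obtain ⟨p, hp, hpz⟩ := hpair s d
  exact ⟨p, hp, s, d, hs, hd, hpz, fun z => (hsz z).trans or_self_iff, hdz⟩

theorem exists_subrel (hsep : SeparationScheme atom mem LU (strLU atom mem))
    {R : (ℕ → M) → Prop} (hR : LUDefinable atom mem R) (v : ℕ → M) (r : M) :
    ∃ r', ¬ atom r' ∧ (∀ p, mem p r' → mem p r) ∧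
      ∀ x y, ⟪x, y⟫ ∈ r' ↔ ⟪x, y⟫ ∈ r ∧ R (cons y (cons x v)) := by
  have hσ (p x y : M) : cons y (cons x (cons p v)) ∘ cons 0 (cons 1 (· + 3)) = cons y (cons x v) :=
    funext fun n => by rcases n with _ | _ | n <;> rfl
  obtain ⟨r', hr', hr'p⟩ := exists_sep hsep
    (exists_cons <| exists_cons <| (isOPair 2 1 0).and (hR.comp (cons 0 (cons 1 (· + 3))))) v r
  refine ⟨r', hr', fun p hp => ((hr'p p).1 hp).1, fun x y => ⟨?_, ?_⟩⟩
  · rintro ⟨p, hp, hpxy⟩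
    obtain ⟨hpr, x', y', hp', hR'⟩ := (hr'p p).1 hp
    obtain ⟨rfl, rfl⟩ := hpxy.inj hp'
    exact ⟨⟨p, hpr, hpxy⟩, hσ p x y ▸ hR'⟩
  · rintro ⟨⟨p, hpr, hpxy⟩, hRxy⟩
    exact ⟨p, (hr'p p).2 ⟨hpr, x, y, hpxy, (hσ p x y).symm ▸ hRxy⟩, hpxy⟩

theorem exists_graph (hpair : PairingAx atom mem)
    (hsep : SeparationScheme atom mem LU (strLU atom mem))
    (hcoll : CollectionScheme atom mem LU (strLU atom mem))
    {R : (ℕ → M) → Prop} (hR : LUDefinable atom mem R) (v : ℕ → M) (a : M)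
    (hfun : ∀ x y y', R (cons y (cons x v)) → R (cons y' (cons x v)) → y = y') :
    ∃ F, ¬ atom F ∧ (∀ p, mem p F → ∃ x y, mem x a ∧ IsOPair (fun z => ¬ atom z) mem p x y) ∧
      ∀ x y, ⟪x, y⟫ ∈ F ↔ mem x a ∧ R (cons y (cons x v)) := by
  have hσ₁ (x p y : M) : cons y (cons p (cons x v)) ∘ cons 0 (· + 2) = cons y (cons x v) :=
    funext fun n => by rcases n with _ | n <;> rfl
  have hσ₂ (x y p : M) :
      cons y (cons x (cons p (cons a v))) ∘ cons 0 (cons 1 (· + 4)) = cons y (cons x v) :=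
    funext fun n => by rcases n with _ | _ | n <;> rfl
  -- collect, for every `x ∈ a` related to some `y`, one pair `(x, y)`
  obtain ⟨C, -, hC⟩ := exists_coll hcoll
    (((hR.comp (cons 0 (· + 2))).exists_cons).imp
      ((hR.comp (cons 0 (· + 2))).and (isOPair 1 2 0)).exists_cons) v a
    (fun x _ => by
      by_cases hx : ∃ y, R (cons y (cons x v))
      · obtain ⟨y, hy⟩ := hx
        obtain ⟨p, hp⟩ := exists_isOPair hpair x y
        exact ⟨p, fun _ => ⟨y, (hσ₁ x p y).symm ▸ hy, hp⟩⟩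
      · exact ⟨x, fun ⟨y, hy⟩ => absurd ⟨y, hσ₁ x x y ▸ hy⟩ hx⟩)
  obtain ⟨F, hF, hFp⟩ := exists_sep hsep
    (exists_cons <| exists_cons <| (mem_var 1 3).and <|
      (hR.comp (cons 0 (cons 1 (· + 4)))).and (isOPair 2 1 0)) (cons a v) C
  refine ⟨F, hF, fun p hp => ?_, fun x y => ⟨?_, ?_⟩⟩
  · obtain ⟨-, x, y, hx, -, hp⟩ := (hFp p).1 hp
    exact ⟨x, y, hx, hp⟩
  · rintro ⟨p, hp, hpxy⟩
    obtain ⟨-, x', y', hx', hR', hp'⟩ := (hFp p).1 hp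
    obtain ⟨rfl, rfl⟩ := hpxy.inj hp'
    exact ⟨hx', hσ₂ x y p ▸ hR'⟩
  · rintro ⟨hx, hRxy⟩
    obtain ⟨p, hpC, hpx⟩ := hC x hx
    obtain ⟨y', hRxy', hp⟩ := hpx ⟨y, (hσ₁ x p y).symm ▸ hRxy⟩
    obtain rfl : y' = y := hfun x y' y (hσ₁ x p y' ▸ hRxy') hRxy
    exact ⟨p, (hFp p).2 ⟨hpC, x, y', hx, (hσ₂ x y' p).symm ▸ hRxy, hp⟩, hp⟩

theorem IsWellOrderOn.exists_min (hsep : SeparationScheme atom mem LU (strLU atom mem))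
    {r w : M} (hw : IsWellOrderOn (fun z => ¬ atom z) mem r w) {P : (ℕ → M) → Prop}
    (hP : LUDefinable atom mem P) (v : ℕ → M) (h : ∃ a, mem a w ∧ P (cons a v)) :
    ∃ a, mem a w ∧ P (cons a v) ∧ ∀ b, ⟪b, a⟫ ∈ r → ¬ P (cons b v) := by
  obtain ⟨S, hS, hSx⟩ := exists_sep hsep hP v w
  obtain ⟨a, haS, hmin⟩ := hw.exists_least hS (h.imp fun a ha => (hSx a).2 ha)
    fun x hx => ((hSx x).1 hx).1
  refine ⟨a, ((hSx a).1 haS).1, ((hSx a).1 haS).2, fun b hba hb => ?_⟩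
  rcases hmin b ((hSx b).2 ⟨(hw.mem_of_pairIn hba).1, hb⟩) with rfl | hab
  exacts [hw.irrefl b hba, hw.asymm hab hba]

theorem IsWellOrderOn.restrict (hsep : SeparationScheme atom mem LU (strLU atom mem))
    {r w d : M} (hw : IsWellOrderOn (fun z => ¬ atom z) mem r w)
    (hdw : ∀ x, mem x d → mem x w) :
    ∃ r', IsWellOrderOn (fun z => ¬ atom z) mem r' d ∧
      ∀ x y, ⟪x, y⟫ ∈ r' ↔ mem x d ∧ mem y d ∧ ⟪x, y⟫ ∈ r := by
  obtain ⟨r', hr', hr'r, hr'xy⟩ :=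
    exists_subrel hsep ((mem_var 1 2).and (mem_var 0 2)) (fun _ => d) r
  have hr'xy (x y : M) : ⟪x, y⟫ ∈ r' ↔ mem x d ∧ mem y d ∧ ⟪x, y⟫ ∈ r :=
    (hr'xy x y).trans ⟨fun ⟨h, hx, hy⟩ => ⟨hx, hy, h⟩, fun ⟨hx, hy, h⟩ => ⟨h, hx, hy⟩⟩
  refine ⟨r', ⟨hr', fun p hp => ?_, fun x _ h => hw.irrefl x ((hr'xy x x).1 h).2.2,
    fun x y z hxy hyz => ?_, fun x y hx hy => ?_, fun s hs hne hsd => ?_⟩, hr'xy⟩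
  · obtain ⟨x, y, -, -, hpxy⟩ := hw.2.1 p (hr'r p hp)
    obtain ⟨hx, hy, -⟩ := (hr'xy x y).1 ⟨p, hp, hpxy⟩
    exact ⟨x, y, hx, hy, hpxy⟩
  · obtain ⟨hx, -, hxy⟩ := (hr'xy x y).1 hxy
    obtain ⟨-, hz, hyz⟩ := (hr'xy y z).1 hyz
    exact (hr'xy x z).2 ⟨hx, hz, hw.trans hxy hyz⟩
  · rcases hw.total (hdw x hx) (hdw y hy) with h | h | h
    exacts [Or.inl h, Or.inr (Or.inl ((hr'xy x y).2 ⟨hx, hy, h⟩)),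
      Or.inr (Or.inr ((hr'xy y x).2 ⟨hy, hx, h⟩))]
  · obtain ⟨m, hm, hmin⟩ := hw.exists_least hs hne fun x hx => hdw x (hsd x hx)
    refine ⟨m, hm, fun x hx => (hmin x hx).imp_right fun h => (hr'xy m x).2 ⟨hsd m hm, hsd x hx, h⟩⟩

section Functions

variable {f a b : M}

theorem IsInjFuncInto.exists_image (hsep : SeparationScheme atom mem LU (strLU atom mem))
    (hf : IsInjFuncInto (fun z => ¬ atom z) mem f a b) :
    ∃ c, ¬ atom c ∧ (∀ y, mem y c → mem y b) ∧ EquinumerousI (fun z => ¬ atom z) mem a c := by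
  obtain ⟨c, hc, hcy⟩ := exists_sep hsep (exists_cons (pairIn 2 0 1)) (fun _ => f) b
  refine ⟨c, hc, fun y hy => ((hcy y).1 hy).1, f,
    hf.mono_cod fun x y hxy => (hcy y).2 ⟨hf.mem_cod hxy, x, hxy⟩, fun y hy => ?_⟩
  obtain ⟨x, hxy⟩ := ((hcy y).1 hy).2
  exact ⟨x, hf.1.mem_dom hxy, hxy⟩

theorem IsInjFuncInto.exists_inverse (hpair : PairingAx atom mem)
    (hsep : SeparationScheme atom mem LU (strLU atom mem))
    (hcoll : CollectionScheme atom mem LU (strLU atom mem))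
    (hf : IsInjFuncInto (fun z => ¬ atom z) mem f a b)
    (hsurj : ∀ y, mem y b → ∃ x, mem x a ∧ ⟪x, y⟫ ∈ f) :
    ∃ g, IsInjFuncInto (fun z => ¬ atom z) mem g b a := by
  obtain ⟨g, hg, hgp, hgyx⟩ := exists_graph hpair hsep hcoll (pairIn 2 0 1) (fun _ => f) b
    fun _ _ _ h h' => hf.injective h h'
  refine ⟨g, ⟨hg, hgp, fun y hy => ?_, fun y x x' h h' => ?_⟩, fun y x h => ?_,
    fun y y' x h h' => ?_⟩
  · obtain ⟨x, -, hxy⟩ := hsurj y hy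
    exact ⟨x, (hgyx y x).2 ⟨hy, hxy⟩⟩
  · exact hf.injective ((hgyx y x).1 h).2 ((hgyx y x').1 h').2
  · exact hf.1.mem_dom ((hgyx y x).1 h).2
  · exact hf.1.functional ((hgyx y x).1 h).2 ((hgyx y' x).1 h').2

theorem IsInjFuncInto.exists_comp (hpair : PairingAx atom mem)
    (hsep : SeparationScheme atom mem LU (strLU atom mem))
    (hcoll : CollectionScheme atom mem LU (strLU atom mem)) {g c : M}
    (hg : IsInjFuncInto (fun z => ¬ atom z) mem g a b)
    (hf : IsInjFuncInto (fun z => ¬ atom z) mem f b c) :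
    ∃ e, IsInjFuncInto (fun z => ¬ atom z) mem e a c := by
  have hfun (x z z' : M) : (∃ y, ⟪x, y⟫ ∈ g ∧ ⟪y, z⟫ ∈ f) → (∃ y, ⟪x, y⟫ ∈ g ∧ ⟪y, z'⟫ ∈ f) →
      z = z' :=
    fun ⟨y, hxy, hyz⟩ ⟨y', hxy', hyz'⟩ => hf.1.functional hyz (hg.1.functional hxy hxy' ▸ hyz')
  obtain ⟨e, he, hep, hexz⟩ := exists_graph hpair hsep hcoll
    (exists_cons ((pairIn 3 2 0).and (pairIn 4 0 1))) (cons g fun _ => f) a hfun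
  refine ⟨e, ⟨he, hep, fun x hx => ?_, fun x z z' h h' => ?_⟩, fun x z h => ?_,
    fun x x' z h h' => ?_⟩
  · obtain ⟨y, hxy⟩ := hg.1.exists_pairIn hx
    obtain ⟨z, hyz⟩ := hf.1.exists_pairIn (hg.mem_cod hxy)
    exact ⟨z, (hexz x z).2 ⟨hx, y, hxy, hyz⟩⟩
  · exact hfun x z z' ((hexz x z).1 h).2 ((hexz x z').1 h').2
  · obtain ⟨-, y, -, hyz⟩ := (hexz x z).1 h
    exact hf.mem_cod hyz
  · obtain ⟨-, y, hxy, hyz⟩ := (hexz x z).1 h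
    obtain ⟨-, y', hxy', hyz'⟩ := (hexz x' z).1 h'
    exact hg.injective hxy (hf.injective hyz hyz' ▸ hxy')

end Functions

variable (atom mem) in
structure IsSegIso (w r v q f x y : M) : Prop where
  isSet : ¬ atom f
  mem_graph : ∀ p, mem p f → ∃ a b, mem a w ∧ ⟪a, x⟫ ∈ r ∧ mem b v ∧ ⟪b, y⟫ ∈ q ∧
    IsOPair (fun z => ¬ atom z) mem p a b
  total : ∀ a, mem a w → ⟪a, x⟫ ∈ r → ∃ b, ⟪a, b⟫ ∈ f
  functional : ∀ a b b', ⟪a, b⟫ ∈ f → ⟪a, b'⟫ ∈ f → b = b'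
  injective : ∀ a a' b, ⟪a, b⟫ ∈ f → ⟪a', b⟫ ∈ f → a = a'
  surjective : ∀ b, mem b v → ⟪b, y⟫ ∈ q → ∃ a, ⟪a, b⟫ ∈ f
  monotone : ∀ a a' b b', ⟪a, b⟫ ∈ f → ⟪a', b'⟫ ∈ f → ⟪a, a'⟫ ∈ r → ⟪b, b'⟫ ∈ q

theorem isSegIso_iff {w r v q f x y : M} : IsSegIso atom mem w r v q f x y ↔
    ¬ atom f ∧
    (∀ p, mem p f → ∃ a b, mem a w ∧ ⟪a, x⟫ ∈ r ∧ mem b v ∧ ⟪b, y⟫ ∈ q ∧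
      IsOPair (fun z => ¬ atom z) mem p a b) ∧
    (∀ a, mem a w → ⟪a, x⟫ ∈ r → ∃ b, ⟪a, b⟫ ∈ f) ∧
    (∀ a b b', ⟪a, b⟫ ∈ f → ⟪a, b'⟫ ∈ f → b = b') ∧
    (∀ a a' b, ⟪a, b⟫ ∈ f → ⟪a', b⟫ ∈ f → a = a') ∧
    (∀ b, mem b v → ⟪b, y⟫ ∈ q → ∃ a, ⟪a, b⟫ ∈ f) ∧
    ∀ a a' b b', ⟪a, b⟫ ∈ f → ⟪a', b'⟫ ∈ f → ⟪a, a'⟫ ∈ r → ⟪b, b'⟫ ∈ q :=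
  ⟨fun ⟨h₁, h₂, h₃, h₄, h₅, h₆, h₇⟩ => ⟨h₁, h₂, h₃, h₄, h₅, h₆, h₇⟩,
    fun ⟨h₁, h₂, h₃, h₄, h₅, h₆, h₇⟩ => ⟨h₁, h₂, h₃, h₄, h₅, h₆, h₇⟩⟩

theorem LUDefinable.isSegIso (w r v q f x y : ℕ) : LUDefinable atom mem
    (fun u => IsSegIso atom mem (u w) (u r) (u v) (u q) (u f) (u x) (u y)) :=
  of_iff ((atom_var f).not.and <|
    (forall_cons <| (mem_var 0 (f + 1)).imp <| exists_cons <| exists_cons <|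
      (mem_var 1 (w + 3)).and <| (pairIn (r + 3) 1 (x + 3)).and <| (mem_var 0 (v + 3)).and <|
      (pairIn (q + 3) 0 (y + 3)).and (isOPair 2 1 0)).and <|
    (forall_cons <| (mem_var 0 (w + 1)).imp <| (pairIn (r + 1) 0 (x + 1)).imp <|
      exists_cons <| pairIn (f + 2) 1 0).and <|
    (forall_cons <| forall_cons <| forall_cons <|
      (pairIn (f + 3) 2 1).imp <| (pairIn (f + 3) 2 0).imp (eq_var 1 0)).and <|
    (forall_cons <| forall_cons <| forall_cons <|
      (pairIn (f + 3) 2 0).imp <| (pairIn (f + 3) 1 0).imp (eq_var 2 1)).and <|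
    (forall_cons <| (mem_var 0 (v + 1)).imp <| (pairIn (q + 1) 0 (y + 1)).imp <|
      exists_cons <| pairIn (f + 2) 0 1).and <|
    forall_cons <| forall_cons <| forall_cons <| forall_cons <|
      (pairIn (f + 4) 3 1).imp <| (pairIn (f + 4) 2 0).imp <|
      (pairIn (r + 4) 3 2).imp (pairIn (q + 4) 1 0)) fun _ => isSegIso_iff

namespace IsSegIso

variable {w r v q f f' x y y' a b : M}

theorem bounds (s : IsSegIso atom mem w r v q f x y) (h : ⟪a, b⟫ ∈ f) :
    mem a w ∧ ⟪a, x⟫ ∈ r ∧ mem b v ∧ ⟪b, y⟫ ∈ q := by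
  obtain ⟨p, hp, hpab⟩ := h
  obtain ⟨a', b', ha, har, hb, hbq, hp'⟩ := s.mem_graph p hp
  obtain ⟨rfl, rfl⟩ := hpab.inj hp'
  exact ⟨ha, har, hb, hbq⟩

theorem restrict (hsep : SeparationScheme atom mem LU (strLU atom mem))
    (hw : IsWellOrderOn (fun z => ¬ atom z) mem r w)
    (hv : IsWellOrderOn (fun z => ¬ atom z) mem q v)
    (s : IsSegIso atom mem w r v q f x y) (hab : ⟪a, b⟫ ∈ f) :
    ∃ f', IsSegIso atom mem w r v q f' a b := by
  obtain ⟨f', hf', hf'f, hf'cd⟩ := exists_subrel hsep (pairIn 2 1 3) (cons r fun _ => a) f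
  obtain ⟨ha, hax, -, hby⟩ := s.bounds hab
  refine ⟨f', ⟨hf', fun p hp => ?_, fun c hc hca => ?_, fun c d d' h h' => ?_,
    fun c c' d h h' => ?_, fun d hd hdb => ?_, fun c c' d d' h h' hcc' => ?_⟩⟩
  · obtain ⟨c, d, hc, -, hd, -, hpcd⟩ := s.mem_graph p (hf'f p hp)
    have hca : ⟪c, a⟫ ∈ r := ((hf'cd c d).1 ⟨p, hp, hpcd⟩).2
    exact ⟨c, d, hc, hca, hd, s.monotone c a d b ⟨p, hf'f p hp, hpcd⟩ hab hca, hpcd⟩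
  · obtain ⟨d, hcd⟩ := s.total c hc (hw.trans hca hax)
    exact ⟨d, (hf'cd c d).2 ⟨hcd, hca⟩⟩
  · exact s.functional c d d' ((hf'cd c d).1 h).1 ((hf'cd c d').1 h').1
  · exact s.injective c c' d ((hf'cd c d).1 h).1 ((hf'cd c' d).1 h').1
  · obtain ⟨c, hcd⟩ := s.surjective d hd (hv.trans hdb hby)
    refine ⟨c, (hf'cd c d).2 ⟨hcd, ?_⟩⟩
    rcases hw.total (s.bounds hcd).1 ha with rfl | hca | hac
    · exact absurd (s.functional c d b hcd hab ▸ hdb) (hv.irrefl b)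
    · exact hca
    · exact absurd (s.monotone a c b d hab hcd hac) (hv.asymm hdb)
  · exact s.monotone c c' d d' ((hf'cd c d).1 h).1 ((hf'cd c' d').1 h').1 hcc'

theorem not_lt_of_agree_below (hw : IsWellOrderOn (fun z => ¬ atom z) mem r w)
    (hv : IsWellOrderOn (fun z => ¬ atom z) mem q v)
    (s : IsSegIso atom mem w r v q f x y) (s' : IsSegIso atom mem w r v q f' x y') {b' : M}
    (hab : ⟪a, b⟫ ∈ f) (hab' : ⟪a, b'⟫ ∈ f')
    (hbelow : ∀ c d d', ⟪c, a⟫ ∈ r → ⟪c, d⟫ ∈ f → ⟪c, d'⟫ ∈ f' → d = d') : ¬ ⟪b, b'⟫ ∈ q := by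
  intro hbb'
  obtain ⟨c, hcb⟩ := s'.surjective b (s.bounds hab).2.2.1 (hv.trans hbb' (s'.bounds hab').2.2.2)
  rcases hw.total (s'.bounds hcb).1 (s.bounds hab).1 with rfl | hca | hac
  · exact hv.irrefl b (s'.functional c b b' hcb hab' ▸ hbb')
  · obtain ⟨d, hcd⟩ := s.total c (s'.bounds hcb).1 (hw.trans hca (s.bounds hab).2.1)
    obtain rfl := s.injective c a b (hbelow c d b hca hcd hcb ▸ hcd) hab
    exact hw.irrefl c hca
  · exact hv.asymm hbb' (s'.monotone a c b' b hab' hcb hac)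

theorem agree (hsep : SeparationScheme atom mem LU (strLU atom mem))
    (hw : IsWellOrderOn (fun z => ¬ atom z) mem r w)
    (hv : IsWellOrderOn (fun z => ¬ atom z) mem q v)
    (s : IsSegIso atom mem w r v q f x y) (s' : IsSegIso atom mem w r v q f' x y') {b' : M}
    (hab : ⟪a, b⟫ ∈ f) (hab' : ⟪a, b'⟫ ∈ f') : b = b' := by
  by_contra hne
  obtain ⟨m, -, ⟨d, d', hmd, hmd', hdd'⟩, hmin⟩ := hw.exists_min hsep
    (exists_cons <| exists_cons <| (pairIn 3 2 1).and <| (pairIn 4 2 0).and (eq_var 1 0).not)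
    (cons f fun _ => f') ⟨a, (s.bounds hab).1, b, b', hab, hab', hne⟩
  have hbelow (c e e') (hcm : ⟪c, m⟫ ∈ r) (hce : ⟪c, e⟫ ∈ f) (hce' : ⟪c, e'⟫ ∈ f') : e = e' :=
    by_contra fun h => hmin c hcm ⟨e, e', hce, hce', h⟩
  rcases hv.total (s.bounds hmd).2.2.1 (s'.bounds hmd').2.2.1 with h | h | h
  · exact hdd' h
  · exact s.not_lt_of_agree_below hw hv s' hmd hmd' hbelow h
  · exact s'.not_lt_of_agree_below hw hv s hmd' hmd
      (fun c e e' hcm hce hce' => (hbelow c e' e hcm hce' hce).symm) h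

theorem not_lt (hsep : SeparationScheme atom mem LU (strLU atom mem))
    (hw : IsWellOrderOn (fun z => ¬ atom z) mem r w)
    (hv : IsWellOrderOn (fun z => ¬ atom z) mem q v)
    (s : IsSegIso atom mem w r v q f x y) (s' : IsSegIso atom mem w r v q f' x y') :
    ¬ ⟪y, y'⟫ ∈ q := fun hyy' => by
  obtain ⟨a, hay⟩ := s'.surjective y (hv.mem_of_pairIn hyy').1 hyy'
  obtain ⟨ha, hax, -, -⟩ := s'.bounds hay
  obtain ⟨b, hab⟩ := s.total a ha hax
  exact hv.irrefl y (s.agree hsep hw hv s' hab hay ▸ (s.bounds hab).2.2.2)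

theorem unique (hsep : SeparationScheme atom mem LU (strLU atom mem))
    (hw : IsWellOrderOn (fun z => ¬ atom z) mem r w)
    (hv : IsWellOrderOn (fun z => ¬ atom z) mem q v)
    (s : IsSegIso atom mem w r v q f x y) (s' : IsSegIso atom mem w r v q f' x y')
    (hy : mem y v) (hy' : mem y' v) : y = y' := by
  rcases hv.total hy hy' with h | h | h
  exacts [h, absurd h (s.not_lt hsep hw hv s'), absurd h (s'.not_lt hsep hw hv s)]

end IsSegIso

variable (atom mem) in
structure IsSegIsoGraph (w r v q F : M) : Prop where
  isSet : ¬ atom F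
  mem_graph : ∀ p, mem p F → ∃ x y, mem x w ∧ IsOPair (fun z => ¬ atom z) mem p x y
  pairIn_iff : ∀ x y, ⟪x, y⟫ ∈ F ↔ mem x w ∧ mem y v ∧ ∃ f, IsSegIso atom mem w r v q f x y

theorem exists_isSegIsoGraph (hpair : PairingAx atom mem)
    (hsep : SeparationScheme atom mem LU (strLU atom mem))
    (hcoll : CollectionScheme atom mem LU (strLU atom mem)) {w r v q : M}
    (hw : IsWellOrderOn (fun z => ¬ atom z) mem r w)
    (hv : IsWellOrderOn (fun z => ¬ atom z) mem q v) : ∃ F, IsSegIsoGraph atom mem w r v q F := by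
  obtain ⟨F, hF, hFp, hFxy⟩ := exists_graph hpair hsep hcoll
    ((mem_var 0 4).and (exists_cons (isSegIso 3 4 5 6 0 2 1)))
    (cons w (cons r (cons v fun _ => q))) w
    fun x y y' ⟨hy, f, s⟩ ⟨hy', f', s'⟩ => s.unique hsep hw hv s' hy hy'
  exact ⟨F, hF, hFp, hFxy⟩

namespace IsSegIsoGraph

variable {w r v q F x x' y y' a b : M}

theorem lt_of_lt (hsep : SeparationScheme atom mem LU (strLU atom mem))
    (hw : IsWellOrderOn (fun z => ¬ atom z) mem r w)
    (hv : IsWellOrderOn (fun z => ¬ atom z) mem q v) (hF : IsSegIsoGraph atom mem w r v q F)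
    (h : ⟪x, y⟫ ∈ F) (h' : ⟪x', y'⟫ ∈ F) (hxx' : ⟪x, x'⟫ ∈ r) : ⟪y, y'⟫ ∈ q := by
  obtain ⟨-, hy, f, s⟩ := (hF.pairIn_iff x y).1 h
  obtain ⟨-, -, f', s'⟩ := (hF.pairIn_iff x' y').1 h'
  obtain ⟨b, hxb⟩ := s'.total x (hw.mem_of_pairIn hxx').1 hxx'
  obtain ⟨f'', s''⟩ := s'.restrict hsep hw hv hxb
  exact s.unique hsep hw hv s'' hy (s'.bounds hxb).2.2.1 ▸ (s'.bounds hxb).2.2.2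

theorem functional (hsep : SeparationScheme atom mem LU (strLU atom mem))
    (hw : IsWellOrderOn (fun z => ¬ atom z) mem r w)
    (hv : IsWellOrderOn (fun z => ¬ atom z) mem q v) (hF : IsSegIsoGraph atom mem w r v q F)
    (h : ⟪x, y⟫ ∈ F) (h' : ⟪x, y'⟫ ∈ F) : y = y' := by
  obtain ⟨-, hy, f, s⟩ := (hF.pairIn_iff x y).1 h
  obtain ⟨-, hy', f', s'⟩ := (hF.pairIn_iff x y').1 h'
  exact s.unique hsep hw hv s' hy hy'

theorem injective (hsep : SeparationScheme atom mem LU (strLU atom mem))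
    (hw : IsWellOrderOn (fun z => ¬ atom z) mem r w)
    (hv : IsWellOrderOn (fun z => ¬ atom z) mem q v) (hF : IsSegIsoGraph atom mem w r v q F)
    (h : ⟪x, y⟫ ∈ F) (h' : ⟪x', y⟫ ∈ F) : x = x' := by
  rcases hw.total ((hF.pairIn_iff x y).1 h).1 ((hF.pairIn_iff x' y).1 h').1 with hxx' | hxx' | hxx'
  · exact hxx'
  · exact absurd (hF.lt_of_lt hsep hw hv h h' hxx') (hv.irrefl y)
  · exact absurd (hF.lt_of_lt hsep hw hv h' h hxx') (hv.irrefl y)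

theorem exists_of_lt_left (hsep : SeparationScheme atom mem LU (strLU atom mem))
    (hw : IsWellOrderOn (fun z => ¬ atom z) mem r w)
    (hv : IsWellOrderOn (fun z => ¬ atom z) mem q v) (hF : IsSegIsoGraph atom mem w r v q F)
    (h : ⟪x, y⟫ ∈ F) (hax : ⟪a, x⟫ ∈ r) : ∃ b, ⟪a, b⟫ ∈ F := by
  obtain ⟨-, -, f, s⟩ := (hF.pairIn_iff x y).1 h
  obtain ⟨b, hab⟩ := s.total a (hw.mem_of_pairIn hax).1 hax
  obtain ⟨ha, -, hb, -⟩ := s.bounds hab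
  exact ⟨b, (hF.pairIn_iff a b).2 ⟨ha, hb, s.restrict hsep hw hv hab⟩⟩

theorem exists_of_lt_right (hsep : SeparationScheme atom mem LU (strLU atom mem))
    (hw : IsWellOrderOn (fun z => ¬ atom z) mem r w)
    (hv : IsWellOrderOn (fun z => ¬ atom z) mem q v) (hF : IsSegIsoGraph atom mem w r v q F)
    (h : ⟪x, y⟫ ∈ F) (hby : ⟪b, y⟫ ∈ q) : ∃ a, ⟪a, b⟫ ∈ F := by
  obtain ⟨-, -, f, s⟩ := (hF.pairIn_iff x y).1 h
  obtain ⟨a, hab⟩ := s.surjective b (hv.mem_of_pairIn hby).1 hby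
  obtain ⟨ha, -, hb, -⟩ := s.bounds hab
  exact ⟨a, (hF.pairIn_iff a b).2 ⟨ha, hb, s.restrict hsep hw hv hab⟩⟩

theorem isSegIso (hsep : SeparationScheme atom mem LU (strLU atom mem))
    (hw : IsWellOrderOn (fun z => ¬ atom z) mem r w)
    (hv : IsWellOrderOn (fun z => ¬ atom z) mem q v) (hF : IsSegIsoGraph atom mem w r v q F)
    {x₀ y₀ : M} (hbound : ∀ a b, ⟪a, b⟫ ∈ F → ⟪a, x₀⟫ ∈ r ∧ ⟪b, y₀⟫ ∈ q)
    (htotal : ∀ a, ⟪a, x₀⟫ ∈ r → ∃ b, ⟪a, b⟫ ∈ F)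
    (hsurj : ∀ b, ⟪b, y₀⟫ ∈ q → ∃ a, ⟪a, b⟫ ∈ F) :
    IsSegIso atom mem w r v q F x₀ y₀ := by
  refine ⟨hF.isSet, fun p hp => ?_, fun a _ => htotal a, fun a b b' => hF.functional hsep hw hv,
    fun a a' b => hF.injective hsep hw hv, fun b _ => hsurj b,
    fun a a' b b' => hF.lt_of_lt hsep hw hv⟩
  obtain ⟨a, b, -, hp'⟩ := hF.mem_graph p hp
  obtain ⟨ha, hb, -⟩ := (hF.pairIn_iff a b).1 ⟨p, hp, hp'⟩
  exact ⟨a, b, ha, (hbound a b ⟨p, hp, hp'⟩).1, hb, (hbound a b ⟨p, hp, hp'⟩).2, hp'⟩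

theorem isInjFuncInto (hsep : SeparationScheme atom mem LU (strLU atom mem))
    (hw : IsWellOrderOn (fun z => ¬ atom z) mem r w)
    (hv : IsWellOrderOn (fun z => ¬ atom z) mem q v) (hF : IsSegIsoGraph atom mem w r v q F)
    {D : M} (hD : ∀ x, mem x D ↔ ∃ y, ⟪x, y⟫ ∈ F) :
    IsInjFuncInto (fun z => ¬ atom z) mem F D v := by
  refine ⟨⟨hF.isSet, fun p hp => ?_, fun x hx => (hD x).1 hx,
    fun x y y' => hF.functional hsep hw hv⟩, fun x y h => ((hF.pairIn_iff x y).1 h).2.1,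
    fun x x' y => hF.injective hsep hw hv⟩
  obtain ⟨x, y, -, hp'⟩ := hF.mem_graph p hp
  exact ⟨x, y, (hD x).2 ⟨y, p, hp, hp'⟩, hp'⟩

theorem lt_of_not_mem_dom (hsep : SeparationScheme atom mem LU (strLU atom mem))
    (hw : IsWellOrderOn (fun z => ¬ atom z) mem r w)
    (hv : IsWellOrderOn (fun z => ¬ atom z) mem q v) (hF : IsSegIsoGraph atom mem w r v q F)
    {x₀ : M} (hx₀ : mem x₀ w) (hx₀F : ¬ ∃ y, ⟪x₀, y⟫ ∈ F) (h : ⟪x, y⟫ ∈ F) : ⟪x, x₀⟫ ∈ r := by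
  rcases hw.total ((hF.pairIn_iff x y).1 h).1 hx₀ with rfl | hxx₀ | hx₀x
  · exact absurd ⟨y, h⟩ hx₀F
  · exact hxx₀
  · exact absurd (hF.exists_of_lt_left hsep hw hv h hx₀x) hx₀F

theorem lt_of_not_mem_ran (hsep : SeparationScheme atom mem LU (strLU atom mem))
    (hw : IsWellOrderOn (fun z => ¬ atom z) mem r w)
    (hv : IsWellOrderOn (fun z => ¬ atom z) mem q v) (hF : IsSegIsoGraph atom mem w r v q F)
    {y₀ : M} (hy₀ : mem y₀ v) (hy₀F : ¬ ∃ x, ⟪x, y₀⟫ ∈ F) (h : ⟪x, y⟫ ∈ F) : ⟪y, y₀⟫ ∈ q := by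
  rcases hv.total ((hF.pairIn_iff x y).1 h).2.1 hy₀ with rfl | hyy₀ | hy₀y
  · exact absurd ⟨x, h⟩ hy₀F
  · exact hyy₀
  · exact absurd (hF.exists_of_lt_right hsep hw hv h hy₀y) hy₀F

/-- Otherwise the least points outside the domain and the range would be related by `F`. -/
theorem total_or_surjective (hsep : SeparationScheme atom mem LU (strLU atom mem))
    (hw : IsWellOrderOn (fun z => ¬ atom z) mem r w)
    (hv : IsWellOrderOn (fun z => ¬ atom z) mem q v) (hF : IsSegIsoGraph atom mem w r v q F) :
    (∀ x, mem x w → ∃ y, ⟪x, y⟫ ∈ F) ∨ ∀ y, mem y v → ∃ x, ⟪x, y⟫ ∈ F := by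
  by_contra! ⟨⟨x, hx, hxF⟩, ⟨y, hy, hyF⟩⟩
  obtain ⟨x₀, hx₀, hx₀F, hx₀min⟩ := hw.exists_min hsep (exists_cons (pairIn 2 1 0)).not
    (fun _ => F) ⟨x, hx, fun ⟨y, h⟩ => hxF y h⟩
  obtain ⟨y₀, hy₀, hy₀F, hy₀min⟩ := hv.exists_min hsep (exists_cons (pairIn 2 0 1)).not
    (fun _ => F) ⟨y, hy, fun ⟨x, h⟩ => hyF x h⟩
  have s := hF.isSegIso hsep hw hv
    (fun a b h => ⟨hF.lt_of_not_mem_dom hsep hw hv hx₀ hx₀F h,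
      hF.lt_of_not_mem_ran hsep hw hv hy₀ hy₀F h⟩)
    (fun a ha => not_not.1 (hx₀min a ha)) (fun b hb => not_not.1 (hy₀min b hb))
  exact hx₀F ⟨y₀, (hF.pairIn_iff x₀ y₀).2 ⟨hx₀, hy₀, F, s⟩⟩

end IsSegIsoGraph

theorem IsWellOrderOn.injective_or_injective_below (hpair : PairingAx atom mem)
    (hsep : SeparationScheme atom mem LU (strLU atom mem))
    (hcoll : CollectionScheme atom mem LU (strLU atom mem)) {w r v q : M}
    (hw : IsWellOrderOn (fun z => ¬ atom z) mem r w)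
    (hv : IsWellOrderOn (fun z => ¬ atom z) mem q v) :
    (∃ g, IsInjFuncInto (fun z => ¬ atom z) mem g v w) ∨
      ∃ y₀, mem y₀ v ∧ ∃ f, IsInjFuncInto (fun z => ¬ atom z) mem f w v ∧
        ∀ x y, ⟪x, y⟫ ∈ f → ⟪y, y₀⟫ ∈ q := by
  obtain ⟨F, hF⟩ := exists_isSegIsoGraph hpair hsep hcoll hw hv
  obtain ⟨D, -, hDx⟩ := exists_sep hsep (exists_cons (pairIn 2 1 0)) (fun _ => F) w
  have hD (x : M) : mem x D ↔ ∃ y, ⟪x, y⟫ ∈ F :=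
    (hDx x).trans ⟨fun h => h.2, fun ⟨y, h⟩ => ⟨((hF.pairIn_iff x y).1 h).1, y, h⟩⟩
  by_cases hsurj : ∀ y, mem y v → ∃ x, ⟪x, y⟫ ∈ F
  · obtain ⟨g, hg⟩ := (hF.isInjFuncInto hsep hw hv hD).exists_inverse hpair hsep hcoll
      fun y hy => (hsurj y hy).imp fun x h => ⟨(hD x).2 ⟨y, h⟩, h⟩
    exact Or.inl ⟨g, hg.mono_cod fun y x h => ((hDx x).1 (hg.mem_cod h)).1⟩
  push Not at hsurj
  obtain ⟨y₀, hy₀, hy₀F⟩ := hsurj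
  have htotal := (hF.total_or_surjective hsep hw hv).resolve_right fun h =>
    (h y₀ hy₀).elim hy₀F
  refine Or.inr ⟨y₀, hy₀, F, hF.isInjFuncInto hsep hw hv fun x => ⟨htotal x, ?_⟩,
    fun x y => hF.lt_of_not_mem_ran hsep hw hv hy₀ (fun ⟨x, h⟩ => hy₀F x h)⟩
  exact fun ⟨y, h⟩ => ((hF.pairIn_iff x y).1 h).1

variable (atom mem) in
def HasCopyOutside (d s : M) : Prop :=
  ∃ c, SetOfAtoms atom mem c ∧ DisjointS mem c s ∧ EquinumerousI (fun z => ¬ atom z) mem d c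

variable (atom mem) in
def Blocked (d : M) : Prop := ∃ s, ¬ atom s ∧ ¬ HasCopyOutside atom mem d s

variable (atom mem) in
def IsSegment (w r a e : M) : Prop := ∀ x, mem x e ↔ mem x w ∧ ⟪x, a⟫ ∈ r


theorem LUDefinable.hasCopyOutside (d s : ℕ) :
    LUDefinable atom mem (fun v => HasCopyOutside atom mem (v d) (v s)) :=
  exists_cons <| (setOfAtoms 0).and <| (disjointS 0 (s + 1)).and (equinumerousI (d + 1) 0)

theorem LUDefinable.blocked (d : ℕ) : LUDefinable atom mem (fun v => Blocked atom mem (v d)) :=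
  exists_cons <| (atom_var 0).not.and (hasCopyOutside (d + 1) 0).not

theorem LUDefinable.isSegment (w r a e : ℕ) :
    LUDefinable atom mem (fun v => IsSegment atom mem (v w) (v r) (v a) (v e)) :=
  forall_cons <| (mem_var 0 (e + 1)).iff ((mem_var 0 (w + 1)).and (pairIn (r + 1) 0 (a + 1)))

theorem hasCopyOutside_of_injective (hsep : SeparationScheme atom mem LU (strLU atom mem))
    {f d c s : M} (hf : IsInjFuncInto (fun z => ¬ atom z) mem f d c)
    (hc : SetOfAtoms atom mem c) (hcs : DisjointS mem c s) : HasCopyOutside atom mem d s := by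
  obtain ⟨c', hc', hc'c, hdc'⟩ := hf.exists_image hsep
  exact ⟨c', ⟨hc', fun x hx => hc.2 x (hc'c x hx)⟩,
    fun ⟨z, hz, hzs⟩ => hcs ⟨z, hc'c z hz, hzs⟩, hdc'⟩

theorem exists_minimal_blocked (hsep : SeparationScheme atom mem LU (strLU atom mem))
    {w₀ r₀ : M} (hr₀ : IsWellOrderOn (fun z => ¬ atom z) mem r₀ w₀) (hw₀ : Blocked atom mem w₀) :
    ∃ d r s, IsWellOrderOn (fun z => ¬ atom z) mem r d ∧ ¬ atom s ∧
      ¬ HasCopyOutside atom mem d s ∧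
      ∀ y e, mem y d → IsSegment atom mem d r y e → ¬ Blocked atom mem e := by
  by_cases h : ∃ a, mem a w₀ ∧ ∃ e, IsSegment atom mem w₀ r₀ a e ∧ Blocked atom mem e
  · obtain ⟨a, -, ⟨d, hd, s, hs, hds⟩, hmin⟩ := hr₀.exists_min hsep
      (exists_cons <| (isSegment 2 3 1 0).and (blocked 0)) (cons w₀ fun _ => r₀) h
    obtain ⟨r, hr, hrxy⟩ := hr₀.restrict hsep fun x hx => ((hd x).1 hx).1
    have hseg (y e : M) (hy : mem y d) (he : IsSegment atom mem d r y e) :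
        IsSegment atom mem w₀ r₀ y e := fun x => by
      have hxd (hxy : ⟪x, y⟫ ∈ r₀) : mem x d :=
        (hd x).2 ⟨(hr₀.mem_of_pairIn hxy).1, hr₀.trans hxy ((hd y).1 hy).2⟩
      rw [he x, hrxy]
      exact ⟨fun ⟨hx, _, _, hxy⟩ => ⟨((hd x).1 hx).1, hxy⟩,
        fun ⟨_, hxy⟩ => ⟨hxd hxy, hxd hxy, hy, hxy⟩⟩
    exact ⟨d, r, s, hr, hs, hds, fun y e hy he he' =>
      hmin y ((hd y).1 hy).2 ⟨e, hseg y e hy he, he'⟩⟩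
  · obtain ⟨s, hs, hw₀s⟩ := hw₀
    exact ⟨w₀, r₀, s, hr₀, hs, hw₀s, fun y e hy he he' => h ⟨y, hy, e, he, he'⟩⟩

theorem hasCopyOutside_of_minimal (hpair : PairingAx atom mem)
    (hsep : SeparationScheme atom mem LU (strLU atom mem))
    (hcoll : CollectionScheme atom mem LU (strLU atom mem)) {d r s w rw t : M}
    (hd : IsWellOrderOn (fun z => ¬ atom z) mem r d) (hds : ¬ HasCopyOutside atom mem d s)
    (hmin : ∀ y e, mem y d → IsSegment atom mem d r y e → ¬ Blocked atom mem e)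
    (hw : SetOfAtoms atom mem w) (hrw : IsWellOrderOn (fun z => ¬ atom z) mem rw w)
    (hws : DisjointS mem w s) (ht : ¬ atom t) : HasCopyOutside atom mem w t := by
  rcases hrw.injective_or_injective_below hpair hsep hcoll hd with ⟨g, hg⟩ | ⟨y, hy, f, hf, hfy⟩
  · exact absurd (hasCopyOutside_of_injective hsep hg hw hws) hds
  obtain ⟨e, -, he⟩ := exists_sep hsep (pairIn 1 0 2) (cons r fun _ => y) d
  obtain ⟨c, hc, hct, g, hg, -⟩ : HasCopyOutside atom mem e t :=
    not_not.1 fun h => hmin y e hy he ⟨t, ht, h⟩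
  obtain ⟨k, hk⟩ := (hf.mono_cod fun x z h => (he z).2 ⟨hf.mem_cod h, hfy x z h⟩).exists_comp
    hpair hsep hcoll hg
  exact hasCopyOutside_of_injective hsep hk hc hct

end ZFUSets

/-- **Urelement duplication.**  Assume `ZFU` plus the assertion that every set of
urelements is well-orderable.  Then there is a set `u` such that every set of urelements
`w` disjoint from `u` can be duplicated: `w` is equinumerous with some set of urelements
`w'` disjoint from both `u` and `w`. -/
theorem urelement_duplication {M : Type u} (atom : M → Prop) (mem : M → M → Prop)
    (hZFU : ZFU atom mem)
    (hWO : ∀ w, SetOfAtoms atom mem w → WellOrderable (fun z => ¬ atom z) mem w) :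
    ∃ u, ¬ atom u ∧
      ∀ w, SetOfAtoms atom mem w → DisjointS mem w u →
        ∃ w', SetOfAtoms atom mem w' ∧ DisjointS mem w' u ∧ DisjointS mem w' w ∧
          EquinumerousI (fun z => ¬ atom z) mem w w' := by
  obtain ⟨-, -, -, hpair, hunion, -, hinf, hsep, hcoll⟩ := hZFU
  by_cases hblocked : ∃ w₀, SetOfAtoms atom mem w₀ ∧ Blocked atom mem w₀
  · obtain ⟨w₀, hw₀, hbl⟩ := hblocked
    obtain ⟨r₀, hr₀⟩ := hWO w₀ hw₀
    obtain ⟨d, r, s, hr, hs, hds, hmin⟩ := exists_minimal_blocked hsep hr₀ hbl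
    refine ⟨s, hs, fun w hw hws => ?_⟩
    obtain ⟨rw, hrw⟩ := hWO w hw
    obtain ⟨t, ht, hts⟩ := exists_union hpair hunion s w
    obtain ⟨w', hw', hw't, hww'⟩ :=
      hasCopyOutside_of_minimal hpair hsep hcoll hr hds hmin hw hrw hws ht
    exact ⟨w', hw', fun ⟨z, hz, hzs⟩ => hw't ⟨z, hz, (hts z).2 (Or.inl hzs)⟩,
      fun ⟨z, hz, hzw⟩ => hw't ⟨z, hz, (hts z).2 (Or.inr hzw)⟩, hww'⟩
  · obtain ⟨e, he, hez⟩ := exists_emptyset hinf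
    refine ⟨e, he, fun w hw _ => ?_⟩
    obtain ⟨w', hw', hw'w, hww'⟩ : HasCopyOutside atom mem w w :=
      not_not.1 fun h => hblocked ⟨w, hw, w, hw.1, h⟩
    exact ⟨w', hw', fun ⟨z, _, hz⟩ => hez z hz, hw'w, hww'⟩

end UST
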